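/- arXiv:1503.07744 — 7 statements merged into one kernel-verified Lean document; each statement's English description precedes it below -/
import Mathlib

section
/- Let d ≥ 2 and let β be the d-Bonacci number. Every element of ℤ[β] is congruent modulo (β-1)ℤ[β] to exactly one of 0, 1, 2, ..., d-2; equivalently, the quotient ring ℤ[β]/(β-1)ℤ[β] has exactly d-1 elements. -/
/-!
The polynomial `P = X ^ d - ∑_{i<d} X ^ i` is the minimal polynomial of `β` over `ℤ`. Indeed,
`(z - 1) P(z) = z ^ (d + 1) - 2 z ^ d + 1`, so a root `z` of `P` with `r = |z| ≥ 1` satisfies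
`1 = r ^ d |2 - z| ≥ r ^ d (2 - r)`, while `r ^ d ≤ ∑_{i<d} r ^ i` gives `r ^ d (2 - r) ≥ 1`;
equality forces `z = r`, a positive real root, and `P` has only one. So every root other
than `β` lies in the open unit disc, and `β` is simple. Hence the cofactor of the minimal
polynomial in `P` has all its roots in the open unit disc, while its constant term, ± their
product, is a nonzero integer: so the cofactor is `1`. Consequently `ℤ[β] ≅ ℤ[X]/(P)`, and `ℤ[β]/(β - 1) ≅ ℤ/(P(1)) = ℤ/(d - 1)`.
-/

open Polynomial Finset

noncomputable def dBonacciPoly (d : ℕ) : ℤ[X] := X ^ d - ∑ i ∈ range d, X ^ i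

theorem dBonacciPoly_monic (d : ℕ) : (dBonacciPoly d).Monic := by
  refine monic_X_pow_sub (lt_of_le_of_lt (degree_sum_le _ _) ?_)
  refine (Finset.sup_lt_iff (WithBot.bot_lt_coe d)).2 fun i hi => ?_
  exact (degree_X_pow_le i).trans_lt (WithBot.coe_lt_coe.2 (mem_range.1 hi))

theorem dBonacciPoly_coeff_zero {d : ℕ} (hd : d ≠ 0) : (dBonacciPoly d).coeff 0 = -1 := by
  simp [dBonacciPoly, coeff_X_pow, finsetSum_coeff, Ne.symm hd, Nat.pos_of_ne_zero hd]

@[simp]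
theorem aeval_dBonacciPoly {A : Type*} [CommRing A] (d : ℕ) (x : A) :
    aeval x (dBonacciPoly d) = x ^ d - ∑ i ∈ range d, x ^ i := by
  simp [dBonacciPoly]

theorem dBonacciPoly_eval_one (d : ℕ) : (dBonacciPoly d).eval 1 = 1 - d := by
  simp [dBonacciPoly]

theorem pow_lt_geom_sum_of_lt {d : ℕ} (hd : d ≠ 0) {x y : ℝ} (hx : 0 < x) (hxy : x < y)
    (hy : y ^ d = ∑ i ∈ range d, y ^ i) : x ^ d < ∑ i ∈ range d, x ^ i := by
  have hy0 : 0 < y := hx.trans hxy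
  set t := x / y
  have ht0 : 0 < t := div_pos hx hy0
  have ht1 : t < 1 := (div_lt_one hy0).2 hxy
  have hxt : x = t * y := (div_mul_cancel₀ x hy0.ne').symm
  calc x ^ d = ∑ i ∈ range d, t ^ d * y ^ i := by rw [hxt, mul_pow, hy, mul_sum]
    _ < ∑ i ∈ range d, t ^ i * y ^ i := by
      refine sum_lt_sum_of_nonempty (nonempty_range_iff.2 hd) fun i hi => ?_
      exact mul_lt_mul_of_pos_right (pow_lt_pow_right_of_lt_one₀ ht0 ht1 (mem_range.1 hi))
        (pow_pos hy0 i)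
    _ = ∑ i ∈ range d, x ^ i := by simp_rw [hxt, mul_pow]

theorem eq_of_pow_eq_geom_sum {d : ℕ} (hd : d ≠ 0) {x y : ℝ} (hx : 0 < x) (hy : 0 < y)
    (hxd : x ^ d = ∑ i ∈ range d, x ^ i) (hyd : y ^ d = ∑ i ∈ range d, y ^ i) : x = y := by
  rcases lt_trichotomy x y with h | h | h
  · exact absurd hxd (pow_lt_geom_sum_of_lt hd hx h hyd).ne
  · exact h
  · exact absurd hyd (pow_lt_geom_sum_of_lt hd hy h hxd).ne

theorem Complex.eq_norm_of_norm_sub_eq {c : ℝ} {z : ℂ} (h : ‖(c : ℂ) - z‖ = c - ‖z‖) :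
    z = ‖z‖ := by
  have hre : (c - z.re) ^ 2 + z.im ^ 2 = (c - ‖z‖) ^ 2 := by
    rw [← h, ← Complex.normSq_eq_norm_sq, Complex.normSq_apply, Complex.sub_re, Complex.sub_im,
      Complex.ofReal_re, Complex.ofReal_im]
    ring
  have hnorm : z.re ^ 2 + z.im ^ 2 = ‖z‖ ^ 2 := by
    rw [← Complex.normSq_eq_norm_sq, Complex.normSq_apply]; ring
  have hc : ‖z‖ ≤ c := by linarith [norm_nonneg ((c : ℂ) - z)]
  have h1 : z.re = ‖z‖ := by nlinarith [norm_nonneg z, Complex.re_le_norm z]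
  have h2 : z.im = 0 := pow_eq_zero_iff two_ne_zero |>.1 (by nlinarith)
  exact Complex.ext (by simp [h1]) (by simp [h2])

theorem norm_lt_one_of_pow_eq_geom_sum {d : ℕ} (hd : d ≠ 0) {β : ℝ} (hβ0 : 0 < β)
    (hβ : β ^ d = ∑ i ∈ range d, β ^ i) {z : ℂ} (hz : z ^ d = ∑ i ∈ range d, z ^ i)
    (hzβ : z ≠ β) : ‖z‖ < 1 := by
  by_contra! hr
  set r := ‖z‖
  -- `(X - 1) * dBonacciPoly d = X ^ (d + 1) - 2 * X ^ d + 1`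
  have hz2 : z ^ d * (2 - z) = 1 := by linear_combination (-1 : ℂ) * geom_sum_mul z d + (1 - z) * hz
  have hr_ge : 1 ≤ r ^ d * (2 - r) := by
    have htri : r ^ d ≤ ∑ i ∈ range d, r ^ i := by
      simpa only [r, ← norm_pow, hz] using norm_sum_le (range d) (z ^ ·)
    nlinarith [geom_sum_mul r d, mul_le_mul_of_nonneg_right htri (sub_nonneg.2 hr)]
  have hr_le : r ^ d * ‖2 - z‖ = 1 := by rw [← norm_pow, ← norm_mul, hz2, norm_one]
  have htri2 : 2 - r ≤ ‖2 - z‖ := by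
    simpa using norm_sub_norm_le (2 : ℂ) z
  have hrd : 0 < r ^ d := pow_pos (by linarith) d
  have heq : ‖((2 : ℝ) : ℂ) - z‖ = 2 - r := by
    push_cast
    nlinarith [mul_le_mul_of_nonneg_left htri2 hrd.le]
  have hzr : z = r := Complex.eq_norm_of_norm_sub_eq heq
  have hrd' : r ^ d = ∑ i ∈ range d, r ^ i := by exact_mod_cast hzr ▸ hz
  exact hzβ (hzr.trans (congrArg _ (eq_of_pow_eq_geom_sum hd (by linarith) hβ0 hrd' hβ)))

theorem aeval_derivative_dBonacciPoly_pos {d : ℕ} (hd : d ≠ 0) {x : ℝ} (hx : 0 < x)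
    (hxd : x ^ d = ∑ i ∈ range d, x ^ i) : 0 < aeval x (derivative (dBonacciPoly d)) := by
  have hmul (n : ℕ) : x * (n * x ^ (n - 1)) = n * x ^ n := by
    rcases n with _ | n
    · simp
    · rw [Nat.add_sub_cancel, pow_succ]; ring
  have hder : aeval x (derivative (dBonacciPoly d)) =
      d * x ^ (d - 1) - ∑ i ∈ range d, i * x ^ (i - 1) := by
    simp [dBonacciPoly, derivative_X_pow]
  have key : x * aeval x (derivative (dBonacciPoly d)) = ∑ i ∈ range d, (d - i : ℝ) * x ^ i := by
    rw [hder, mul_sub, mul_sum, hmul, hxd, mul_sum, ← sum_sub_distrib]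
    simp_rw [hmul, sub_mul]
  have hsum : 0 < ∑ i ∈ range d, (d - i : ℝ) * x ^ i :=
    sum_pos (fun i hi => mul_pos (by simpa using mem_range.1 hi) (pow_pos hx i))
      (nonempty_range_iff.2 hd)
  exact pos_of_mul_pos_right (key ▸ hsum) hx.le

theorem Polynomial.eq_one_of_monic_of_norm_root_lt_one {h : ℤ[X]} (hm : h.Monic)
    (h0 : h.coeff 0 ≠ 0) (hroots : ∀ z : ℂ, aeval z h = 0 → ‖z‖ < 1) : h = 1 := by
  by_contra hne
  set H := h.map (algebraMap ℤ ℂ)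
  have hHm : H.Monic := hm.map _
  have hsplit : H.Splits := IsAlgClosed.splits H
  have hroots_ne : H.roots ≠ 0 := by
    rw [← Multiset.card_pos, ← hsplit.natDegree_eq_card_roots, hm.natDegree_map,
      Nat.pos_iff_ne_zero]
    exact mt hm.natDegree_eq_zero.1 hne
  have hroot_mem (z : ℂ) (hz : z ∈ H.roots) : aeval z h = 0 := by
    rwa [mem_roots hHm.ne_zero, IsRoot, eval_map, ← aeval_def] at hz
  have hroot_pos (z : ℂ) (hz : z ∈ H.roots) : 0 < ‖z‖ := by
    refine norm_pos_iff.2 fun hz0 => h0 ?_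
    have := hroot_mem z hz
    rwa [hz0, aeval_def, eval₂_at_zero, algebraMap_int_eq, eq_intCast, Int.cast_eq_zero] at this
  have hprod : (H.roots.map (‖·‖)).prod < 1 := by
    simpa using Multiset.prod_map_lt_prod_map hroots_ne (‖·‖) 1 hroot_pos
      fun z hz => hroots z (hroot_mem z hz)
  have hcoeff : (h.coeff 0 : ℂ) = (-1) ^ H.natDegree * H.roots.prod := by
    rw [← hsplit.coeff_zero_eq_prod_roots_of_monic hHm, coeff_map, eq_intCast]
  have hnorm : (|h.coeff 0| : ℝ) = (H.roots.map (‖·‖)).prod := by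
    rw [← Complex.norm_intCast, hcoeff, norm_mul, norm_pow, norm_neg, norm_one, one_pow, one_mul]
    exact map_multiset_prod (normHom : ℂ →*₀ ℝ) _
  have h1 : (1 : ℝ) ≤ |(h.coeff 0 : ℝ)| := by exact_mod_cast Int.one_le_abs h0
  linarith

theorem minpoly_eq_of_norm_root_lt_one {p : ℤ[X]} (hp : p.Monic) (hp0 : p.coeff 0 ≠ 0) {α : ℝ}
    (hα : aeval α p = 0) (hα' : aeval α (derivative p) ≠ 0)
    (hroots : ∀ z : ℂ, aeval z p = 0 → z ≠ α → ‖z‖ < 1) : minpoly ℤ α = p := by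
  have hint : IsIntegral ℤ α := ⟨p, hp, hα⟩
  obtain ⟨h, hph⟩ := minpoly.isIntegrallyClosed_dvd hint hα
  -- `α` is a simple root of `p = minpoly ℤ α * h`, so it is not a root of `h`
  have hhα : aeval α h ≠ 0 := by
    intro hh
    apply hα'
    simp [hph, derivative_mul, hh]
  have hh0 : h.coeff 0 ≠ 0 := right_ne_zero_of_mul (by rwa [← mul_coeff_zero, ← hph])
  have hh1 : h = 1 := by
    refine eq_one_of_monic_of_norm_root_lt_one ((minpoly.monic hint).of_mul_monic_left (hph ▸ hp))
      hh0 fun z hz => hroots z (by rw [hph, map_mul, hz, mul_zero]) ?_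
    rintro rfl
    rw [← Complex.coe_algebraMap, aeval_algebraMap_apply, Complex.coe_algebraMap,
      Complex.ofReal_eq_zero] at hz
    exact hhα hz
  rw [hph, hh1, mul_one]

theorem minpoly_dBonacciPoly {d : ℕ} (hd : d ≠ 0) {β : ℝ} (hβ0 : 0 < β)
    (hβ : β ^ d = ∑ i ∈ range d, β ^ i) : minpoly ℤ β = dBonacciPoly d :=
  minpoly_eq_of_norm_root_lt_one (dBonacciPoly_monic d) (by simp [dBonacciPoly_coeff_zero hd])
    (by simp [hβ]) (aeval_derivative_dBonacciPoly_pos hd hβ0 hβ).ne'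
    fun z hz hzβ => norm_lt_one_of_pow_eq_geom_sum hd hβ0 hβ (sub_eq_zero.1 (by simpa using hz)) hzβ

section AdjoinQuotient

variable {R A : Type*} [CommRing R] [CommRing A] [Algebra R A]

variable (R) in
def adjoinGen (x : A) : Algebra.adjoin R {x} :=
  ⟨x, Algebra.self_mem_adjoin_singleton R x⟩

variable (R) in
@[simp]
theorem coe_adjoinGen (x : A) : (adjoinGen R x : A) = x := rfl

theorem exists_aeval_adjoinGen_eq (x : A) (a : Algebra.adjoin R {x}) :
    ∃ F : R[X], aeval (adjoinGen R x) F = a := by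
  obtain ⟨F, hF⟩ : (a : A) ∈ (aeval (R := R) x).range := by
    rw [← Algebra.adjoin_singleton_eq_range_aeval]; exact a.2
  exact ⟨F, Subtype.ext (by rw [aeval_subalgebra_coe]; exact hF)⟩

theorem aeval_adjoinGen_eq_zero_iff {x : A} {F : R[X]} :
    aeval (adjoinGen R x) F = 0 ↔ aeval x F = 0 := by
  rw [← Subtype.coe_inj, aeval_subalgebra_coe]
  rfl

theorem quotient_mk_eq_natCast_iff (x : A) (a : Algebra.adjoin R {x}) (j : ℕ) :
    Ideal.Quotient.mk (Ideal.span {adjoinGen R x - 1}) a = j ↔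
      ∃ z ∈ Algebra.adjoin R {x}, (a : A) - j = (x - 1) * z := by
  rw [← map_natCast (Ideal.Quotient.mk _) j, Ideal.Quotient.eq, Ideal.mem_span_singleton']
  constructor
  · rintro ⟨c, hc⟩
    exact ⟨c, c.2, by simpa [mul_comm] using congrArg Subtype.val hc.symm⟩
  · rintro ⟨z, hz, h⟩
    exact ⟨⟨z, hz⟩, Subtype.ext (by simp [h, mul_comm])⟩

theorem surjective_algebraMap_quotient_adjoinGen_sub_one (x : A) :
    Function.Surjective
      (algebraMap R (Algebra.adjoin R {x} ⧸ Ideal.span {adjoinGen R x - 1})) := by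
  intro y
  obtain ⟨a, rfl⟩ := Ideal.Quotient.mk_surjective y
  obtain ⟨F, rfl⟩ := exists_aeval_adjoinGen_eq x a
  have hgen : Ideal.Quotient.mkₐ R (Ideal.span {adjoinGen R x - 1}) (adjoinGen R x) = 1 := by
    rw [← map_one (Ideal.Quotient.mkₐ R _), Ideal.Quotient.mkₐ_eq_mk, Ideal.Quotient.eq]
    exact Ideal.mem_span_singleton_self _
  refine ⟨F.eval 1, ?_⟩
  rw [← Ideal.Quotient.mkₐ_eq_mk R, ← aeval_algHom_apply, hgen, aeval_def, eval₂_at_one]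

variable [IsDomain R] [IsIntegrallyClosed R] [IsDomain A] [Module.IsTorsionFree R A]

theorem ker_algebraMap_quotient_adjoinGen_sub_one {x : A} (hx : IsIntegral R x) :
    RingHom.ker (algebraMap R (Algebra.adjoin R {x} ⧸ Ideal.span {adjoinGen R x - 1})) =
      Ideal.span {(minpoly R x).eval 1} := by
  ext n
  rw [RingHom.mem_ker, ← Ideal.Quotient.mk_algebraMap, Ideal.Quotient.eq_zero_iff_mem,
    Ideal.mem_span_singleton', Ideal.mem_span_singleton]
  constructor
  · rintro ⟨c, hc⟩
    obtain ⟨F, rfl⟩ := exists_aeval_adjoinGen_eq x c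
    have hF : aeval x (F * (X - 1) - C n) = 0 := by
      rw [← aeval_adjoinGen_eq_zero_iff]
      simp [hc]
    simpa using eval_dvd (x := 1) (minpoly.isIntegrallyClosed_dvd hx hF)
  · rintro ⟨t, rfl⟩
    obtain ⟨Q, hQ⟩ := X_sub_C_dvd_sub_C_eval (p := minpoly R x) (a := 1)
    have hQx := congrArg (aeval (adjoinGen R x)) hQ
    rw [map_sub, aeval_adjoinGen_eq_zero_iff.2 (minpoly.aeval R x)] at hQx
    refine ⟨-aeval (adjoinGen R x) Q * algebraMap R _ t, ?_⟩
    rw [map_mul]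
    simp only [map_sub, map_mul, map_one, aeval_C, aeval_X, zero_sub] at hQx
    linear_combination (algebraMap R _ t) * hQx

noncomputable def quotientAdjoinGenSubOneEquiv {x : A} (hx : IsIntegral R x) :
    Algebra.adjoin R {x} ⧸ Ideal.span {adjoinGen R x - 1} ≃+*
      R ⧸ Ideal.span {(minpoly R x).eval 1} :=
  ((Ideal.quotEquivOfEq (ker_algebraMap_quotient_adjoinGen_sub_one hx)).symm.trans
    (RingHom.quotientKerEquivOfSurjective
      (surjective_algebraMap_quotient_adjoinGen_sub_one x))).symm

end AdjoinQuotient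

theorem ZMod.existsUnique_natCast_eq {n : ℕ} [NeZero n] (c : ZMod n) :
    ∃! j : ℕ, j < n ∧ (j : ZMod n) = c :=
  ⟨c.val, ⟨c.val_lt, c.natCast_zmod_val⟩, fun j ⟨hj, hjc⟩ => by rw [← hjc, ZMod.val_cast_of_lt hj]⟩

theorem dBonacci_quotient_card_general (d : ℕ) (hd : 2 ≤ d) (β : ℝ) (h1 : 1 < β)
    (hβ : β ^ d = ∑ i ∈ Finset.range d, β ^ i)
    (b : Algebra.adjoin ℤ ({β} : Set ℝ)) (hb : (b : ℝ) = β - 1) :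
    (∀ x ∈ Algebra.adjoin ℤ ({β} : Set ℝ),
      ∃! j : ℕ, j ≤ d - 2 ∧ ∃ z ∈ Algebra.adjoin ℤ ({β} : Set ℝ), x - (j : ℝ) = (β - 1) * z) ∧
    Nat.card (Algebra.adjoin ℤ ({β} : Set ℝ) ⧸ Ideal.span {b}) = d - 1 := by
  obtain rfl : b = adjoinGen ℤ β - 1 := Subtype.ext (by simpa using hb)
  have hroot : aeval β (dBonacciPoly d) = 0 := by simp [hβ]
  have hint : IsIntegral ℤ β := ⟨dBonacciPoly d, dBonacciPoly_monic d, hroot⟩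
  have hn : ((minpoly ℤ β).eval 1).natAbs = d - 1 := by
    rw [minpoly_dBonacciPoly (by omega) (by linarith) hβ, dBonacciPoly_eval_one]
    omega
  obtain ⟨e⟩ : Nonempty (Algebra.adjoin ℤ {β} ⧸ Ideal.span {adjoinGen ℤ β - 1} ≃+* ZMod (d - 1)) :=
    ⟨hn ▸ (quotientAdjoinGenSubOneEquiv hint).trans (Int.quotientSpanEquivZMod _)⟩
  have : NeZero (d - 1) := ⟨by omega⟩
  refine ⟨fun x hx => ?_, by rw [Nat.card_congr e.toEquiv, Nat.card_zmod]⟩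
  have key (j : ℕ) : (j ≤ d - 2 ∧ ∃ z ∈ Algebra.adjoin ℤ {β}, x - j = (β - 1) * z) ↔
      (j < d - 1 ∧ (j : ZMod (d - 1)) = e (Ideal.Quotient.mk _ ⟨x, hx⟩)) := by
    rw [← quotient_mk_eq_natCast_iff β ⟨x, hx⟩ j, ← e.injective.eq_iff, map_natCast, eq_comm]
    exact and_congr_left' (by omega)
  simpa only [key] using ZMod.existsUnique_natCast_eq (e (Ideal.Quotient.mk _ ⟨x, hx⟩))

/-- For the d-Bonacci number `β`, every element of `ℤ[β]` is congruent modulo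
`(β-1)ℤ[β]` to exactly one of `0, 1, ..., d-2`; equivalently the quotient ring
`ℤ[β]/(β-1)` has exactly `d-1` elements. -/
theorem dBonacci_quotient_card (d : ℕ) (hd : 2 ≤ d) (β : ℝ) (h1 : 1 < β) (h2 : β < 2)
    (hβ : β ^ d = ∑ i ∈ Finset.range d, β ^ i)
    (b : Algebra.adjoin ℤ ({β} : Set ℝ)) (hb : (b : ℝ) = β - 1) :
    (∀ x ∈ Algebra.adjoin ℤ ({β} : Set ℝ),
      ∃! j : ℕ, j ≤ d - 2 ∧ ∃ z ∈ Algebra.adjoin ℤ ({β} : Set ℝ), x - (j : ℝ) = (β - 1) * z) ∧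
    Nat.card (Algebra.adjoin ℤ ({β} : Set ℝ) ⧸ Ideal.span {b}) = d - 1 :=
  dBonacci_quotient_card_general d hd β h1 hβ b hb
end

section
/- Let β ∈ (1,2) be the d-Bonacci number with d ≥ 2, and define the symmetric β-transformation T(x) = βx - ⌊βx + 1/2⌋ on X = [-1/2, β/2 - 1) ∪ [1 - β/2, 1/2). Then T maps X into X. -/
/-- The symmetric β-transformation `T x = βx - ⌊βx + 1/2⌋` maps
`X = [-1/2, β/2-1) ∪ [1-β/2, 1/2)` into itself, for the d-Bonacci number `β`. -/
theorem symmetric_maps_into (d : ℕ) (hd : 2 ≤ d) (β : ℝ) (h1 : 1 < β) (h2 : β < 2)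
    (hβ : β ^ d = ∑ i ∈ Finset.range d, β ^ i) :
    ∀ x ∈ Set.Ico (-(1 : ℝ)/2) (β/2 - 1) ∪ Set.Ico (1 - β/2) (1/2 : ℝ),
      β * x - (⌊β * x + 1/2⌋ : ℤ) ∈
        Set.Ico (-(1 : ℝ)/2) (β/2 - 1) ∪ Set.Ico (1 - β/2) (1/2 : ℝ) := by
  intro x hx
  have hβ0 : (0:ℝ) < β := by linarith
  rcases hx with ⟨hx1, hx2⟩ | ⟨hx1, hx2⟩
  · -- x ∈ [-1/2, β/2-1)
    have hlow : β * (-(1:ℝ)/2) ≤ β * x := by nlinarith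
    have hup : β * x < β * (β/2 - 1) := by nlinarith
    rcases lt_or_ge (β * x) (-(1:ℝ)/2) with h | h
    · have hf : ⌊β * x + 1/2⌋ = -1 := by
        rw [Int.floor_eq_iff] <;> push_cast <;> constructor <;> nlinarith
      rw [hf]
      right
      constructor <;> push_cast <;> nlinarith
    · have hf : ⌊β * x + 1/2⌋ = 0 := by
        rw [Int.floor_eq_iff] <;> push_cast <;> constructor <;> nlinarith
      rw [hf]
      left
      constructor <;> push_cast <;> nlinarith
  · -- x ∈ [1-β/2, 1/2)
    have hlow : β * (1 - β/2) ≤ β * x := by nlinarith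
    have hup : β * x < β * ((1:ℝ)/2) := by nlinarith
    rcases lt_or_ge (β * x) ((1:ℝ)/2) with h | h
    · have hf : ⌊β * x + 1/2⌋ = 0 := by
        rw [Int.floor_eq_iff] <;> push_cast <;> constructor <;> nlinarith
      rw [hf]
      right
      constructor <;> push_cast <;> nlinarith
    · have hf : ⌊β * x + 1/2⌋ = 1 := by
        rw [Int.floor_eq_iff] <;> push_cast <;> constructor <;> nlinarith
      rw [hf]
      left
      constructor <;> push_cast <;> nlinarith
end

section
/- Let β ∈ (1,2) be the d-Bonacci number, T_S the symmetric β-transformation on X_S = [-1/2, β/2-1) ∪ [1-β/2, 1/2), and T_B the balanced β-transformation on X_B = [(2-β)/(2β-2), β/(2β-2)). Define ψ: X_S → X_B by ψ(x) = x/(β-1) if x ∈ [1-β/2, 1/2) and ψ(x) = (x+1)/(β-1) if x ∈ [-1/2, β/2-1). Then ψ is a bijection from X_S to X_B and ψ ∘ T_S = T_B ∘ ψ. -/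
/-!
On the left piece of `X_S` the map `ψ` is `x ↦ (x + 1)/(β - 1)`, on the right piece `x ↦ x/(β - 1)`;
these send the two pieces affinely onto the halves of `X_B` above and below the balanced threshold
`1/(2β - 2)`, so `ψ` is a bijection.

For the conjugacy, write `(β - 1) ψ y = y + [y < β/2 - 1]`. For `x ∈ X_S` the point `βx` lies on the
same side of `β/2 - 1` as `x`, and subtracting a nonzero symmetric digit moves it to the other side,
so the indicator absorbs the digit: `(β - 1) ψ (T_S x) = βx + [x < β/2 - 1]`. Since `ψ x` lies above
the threshold exactly when `x < β/2 - 1`, `T_B (ψ x)` takes the same value.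
-/

open Set

theorem Set.BijOn.union_of_disjoint {α γ : Type*} {f : α → γ} {s₁ s₂ : Set α} {t₁ t₂ : Set γ}
    (h₁ : BijOn f s₁ t₁) (h₂ : BijOn f s₂ t₂) (ht : Disjoint t₁ t₂) :
    BijOn f (s₁ ∪ s₂) (t₁ ∪ t₂) :=
  h₁.union h₂ <| (injOn_union ((ht.preimage f).mono h₁.mapsTo h₂.mapsTo)).mpr
    ⟨h₁.injOn, h₂.injOn, fun _ hx _ hy => ht.ne_of_mem (h₁.mapsTo hx) (h₂.mapsTo hy)⟩

theorem bijOn_add_div_Ico {r : ℝ} (hr : 0 < r) (a b c : ℝ) :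
    BijOn (fun x => (x + c) / r) (Ico a b) (Ico ((a + c) / r) ((b + c) / r)) := by
  refine ⟨fun x hx => ⟨?_, ?_⟩, fun x _ y _ h => by simpa [hr.ne'] using h,
    fun y ⟨hay, hyb⟩ => ⟨r * y - c, ⟨?_, ?_⟩, by field_simp; ring⟩⟩
  · exact div_le_div_of_nonneg_right (by linarith [hx.1]) hr.le
  · exact div_lt_div_of_pos_right (by linarith [hx.2]) hr
  · rw [div_le_iff₀ hr] at hay; linarith
  · rw [lt_div_iff₀ hr] at hyb; linarith

noncomputable def symmetricBetaMap (β x : ℝ) : ℝ := β * x - (⌊β * x + 1/2⌋ : ℤ)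

noncomputable def balancedBetaMap (β x : ℝ) : ℝ := if 1/(2*β - 2) ≤ x then β * x - 1 else β * x

noncomputable def symmetricToBalanced (β x : ℝ) : ℝ :=
  if x < β/2 - 1 then (x + 1)/(β - 1) else x/(β - 1)

variable {β x : ℝ}

theorem symmetricToBalanced_of_lt (hx : x < β/2 - 1) :
    symmetricToBalanced β x = (x + 1)/(β - 1) :=
  if_pos hx

theorem symmetricToBalanced_of_le (hx : β/2 - 1 ≤ x) :
    symmetricToBalanced β x = x/(β - 1) :=
  if_neg hx.not_gt

theorem bijOn_symmetricToBalanced_left (h1 : 1 < β) :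
    BijOn (symmetricToBalanced β) (Ico (-(1 : ℝ)/2) (β/2 - 1))
      (Ico (1/(2*β - 2)) (β/(2*β - 2))) := by
  have hβ : 0 < β - 1 := by linarith
  convert (bijOn_add_div_Ico hβ (-(1 : ℝ)/2) (β/2 - 1) 1).congr (f₂ := symmetricToBalanced β)
    fun x hx => (symmetricToBalanced_of_lt hx.2).symm using 2 <;> field_simp <;> ring

theorem bijOn_symmetricToBalanced_right (h1 : 1 < β) (h2 : β < 2) :
    BijOn (symmetricToBalanced β) (Ico (1 - β/2) (1/2 : ℝ))
      (Ico ((2 - β)/(2*β - 2)) (1/(2*β - 2))) := by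
  have hβ : 0 < β - 1 := by linarith
  have heq : EqOn (fun x => (x + 0)/(β - 1)) (symmetricToBalanced β) (Ico (1 - β/2) (1/2)) :=
    fun x hx => by
      simp only [symmetricToBalanced_of_le (by linarith [hx.1] : β/2 - 1 ≤ x), add_zero]
  convert (bijOn_add_div_Ico hβ (1 - β/2) (1/2) 0).congr heq using 2 <;> field_simp <;> ring

theorem bijOn_symmetricToBalanced (h1 : 1 < β) (h2 : β < 2) :
    BijOn (symmetricToBalanced β) (Ico (-(1 : ℝ)/2) (β/2 - 1) ∪ Ico (1 - β/2) (1/2 : ℝ))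
      (Ico ((2 - β)/(2*β - 2)) (β/(2*β - 2))) := by
  have hsplit : (2 - β)/(2*β - 2) ≤ 1/(2*β - 2) ∧ 1/(2*β - 2) ≤ β/(2*β - 2) :=
    ⟨by gcongr <;> linarith, by gcongr; linarith⟩
  rw [← Ico_union_Ico_eq_Ico hsplit.1 hsplit.2, union_comm (Ico ((2 - β)/(2*β - 2)) _)]
  exact (bijOn_symmetricToBalanced_left h1).union_of_disjoint
    (bijOn_symmetricToBalanced_right h1 h2) Ico_disjoint_Ico_same.symm

theorem symmetricToBalanced_symmetricBetaMap_of_mem_left (h1 : 1 < β) (h2 : β < 2)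
    (hx : x ∈ Ico (-(1 : ℝ)/2) (β/2 - 1)) :
    symmetricToBalanced β (symmetricBetaMap β x) = (β * x + 1)/(β - 1) := by
  obtain ⟨hx1, hx2⟩ := hx
  have hβ : 0 < (β - 1) * (2 - β) := mul_pos (by linarith) (by linarith)
  have hβx : β * x < β * (β/2 - 1) := mul_lt_mul_of_pos_left hx2 (by linarith)
  rcases lt_or_ge (β * x + 1/2) 0 with hneg | hnonneg
  · have hfloor : ⌊β * x + 1/2⌋ = -1 := by
      rw [Int.floor_eq_iff]; push_cast; constructor <;> nlinarith
    rw [symmetricBetaMap, hfloor, symmetricToBalanced_of_le (by push_cast; nlinarith)]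
    push_cast; ring
  · have hfloor : ⌊β * x + 1/2⌋ = 0 := by
      rw [Int.floor_eq_zero_iff]; constructor <;> nlinarith
    rw [symmetricBetaMap, hfloor, symmetricToBalanced_of_lt (by push_cast; nlinarith)]
    push_cast; ring

theorem symmetricToBalanced_symmetricBetaMap_of_mem_right (h1 : 1 < β) (h2 : β < 2)
    (hx : x ∈ Ico (1 - β/2) (1/2 : ℝ)) :
    symmetricToBalanced β (symmetricBetaMap β x) = β * x/(β - 1) := by
  obtain ⟨hx1, hx2⟩ := hx
  have hβ : 0 < (β - 1) * (2 - β) := mul_pos (by linarith) (by linarith)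
  have hβx : β * (1 - β/2) ≤ β * x := mul_le_mul_of_nonneg_left hx1 (by linarith)
  rcases lt_or_ge (β * x + 1/2) 1 with hlt | hge
  · have hfloor : ⌊β * x + 1/2⌋ = 0 := by
      rw [Int.floor_eq_zero_iff]; constructor <;> nlinarith
    rw [symmetricBetaMap, hfloor, symmetricToBalanced_of_le (by push_cast; nlinarith)]
    push_cast; ring
  · have hfloor : ⌊β * x + 1/2⌋ = 1 := by
      rw [Int.floor_eq_iff]; push_cast; constructor <;> nlinarith
    rw [symmetricBetaMap, hfloor, symmetricToBalanced_of_lt (by push_cast; nlinarith)]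
    push_cast; field_simp; ring

theorem balancedBetaMap_symmetricToBalanced_of_mem_left (h1 : 1 < β)
    (hx : x ∈ Ico (-(1 : ℝ)/2) (β/2 - 1)) :
    balancedBetaMap β (symmetricToBalanced β x) = (β * x + 1)/(β - 1) := by
  have hβ : 0 < β - 1 := by linarith
  rw [symmetricToBalanced_of_lt hx.2, balancedBetaMap, if_pos]
  · field_simp; ring
  · rw [div_le_div_iff₀ (by linarith) hβ]; nlinarith [hx.1]

theorem balancedBetaMap_symmetricToBalanced_of_mem_right (h1 : 1 < β) (h2 : β < 2)
    (hx : x ∈ Ico (1 - β/2) (1/2 : ℝ)) :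
    balancedBetaMap β (symmetricToBalanced β x) = β * x/(β - 1) := by
  have hβ : 0 < β - 1 := by linarith
  rw [symmetricToBalanced_of_le (by linarith [hx.1]), balancedBetaMap, if_neg]
  · ring
  · rw [div_le_div_iff₀ (by linarith) hβ]; nlinarith [hx.2]

theorem symmetricToBalanced_symmetricBetaMap (h1 : 1 < β) (h2 : β < 2)
    (hx : x ∈ Ico (-(1 : ℝ)/2) (β/2 - 1) ∪ Ico (1 - β/2) (1/2 : ℝ)) :
    symmetricToBalanced β (symmetricBetaMap β x) = balancedBetaMap β (symmetricToBalanced β x) := by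
  rcases hx with hx | hx
  · rw [symmetricToBalanced_symmetricBetaMap_of_mem_left h1 h2 hx,
      balancedBetaMap_symmetricToBalanced_of_mem_left h1 hx]
  · rw [symmetricToBalanced_symmetricBetaMap_of_mem_right h1 h2 hx,
      balancedBetaMap_symmetricToBalanced_of_mem_right h1 h2 hx]

theorem psi_conjugacy_general (β : ℝ) (h1 : 1 < β) (h2 : β < 2)
    (TS TB ψ : ℝ → ℝ)
    (hTS : ∀ x, TS x = β * x - (⌊β * x + 1/2⌋ : ℤ))
    (hTB : ∀ x, TB x = if 1/(2*β - 2) ≤ x then β * x - 1 else β * x)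
    (hψ : ∀ x, ψ x = if x < β/2 - 1 then (x + 1)/(β - 1) else x/(β - 1)) :
    Set.BijOn ψ (Set.Ico (-(1 : ℝ)/2) (β/2 - 1) ∪ Set.Ico (1 - β/2) (1/2 : ℝ))
      (Set.Ico ((2 - β)/(2*β - 2)) (β/(2*β - 2))) ∧
    ∀ x ∈ Set.Ico (-(1 : ℝ)/2) (β/2 - 1) ∪ Set.Ico (1 - β/2) (1/2 : ℝ),
      ψ (TS x) = TB (ψ x) := by
  obtain rfl : TS = symmetricBetaMap β := funext hTS
  obtain rfl : TB = balancedBetaMap β := funext hTB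
  obtain rfl : ψ = symmetricToBalanced β := funext hψ
  exact ⟨bijOn_symmetricToBalanced h1 h2,
    fun _ hx => symmetricToBalanced_symmetricBetaMap h1 h2 hx⟩

/-- The map `ψ` is a bijection from `X_S` onto `X_B` conjugating the symmetric
β-transformation `T_S` to the balanced β-transformation `T_B`. -/
theorem psi_conjugacy (d : ℕ) (hd : 2 ≤ d) (β : ℝ) (h1 : 1 < β) (h2 : β < 2)
    (hβ : β ^ d = ∑ i ∈ Finset.range d, β ^ i)
    (TS TB ψ : ℝ → ℝ)
    (hTS : ∀ x, TS x = β * x - (⌊β * x + 1/2⌋ : ℤ))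
    (hTB : ∀ x, TB x = if 1/(2*β - 2) ≤ x then β * x - 1 else β * x)
    (hψ : ∀ x, ψ x = if x < β/2 - 1 then (x + 1)/(β - 1) else x/(β - 1)) :
    Set.BijOn ψ (Set.Ico (-(1 : ℝ)/2) (β/2 - 1) ∪ Set.Ico (1 - β/2) (1/2 : ℝ))
      (Set.Ico ((2 - β)/(2*β - 2)) (β/(2*β - 2))) ∧
    ∀ x ∈ Set.Ico (-(1 : ℝ)/2) (β/2 - 1) ∪ Set.Ico (1 - β/2) (1/2 : ℝ),
      ψ (TS x) = TB (ψ x) :=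
  psi_conjugacy_general β h1 h2 TS TB ψ hTS hTB hψ
end

section
/- Let β ∈ (1,2) be the d-Bonacci number with d ≥ 2, and let T be the symmetric β-transformation T(x) = βx - ⌊βx + 1/2⌋ on X = [-1/2, β/2-1) ∪ [1-β/2, 1/2). Then every nonzero x of the form x = ε·∑_{i=2}^d p_i β^{-i} with ε ∈ {1,-1} and p_i ∈ {0,1} lies in X and is a purely periodic point of T: T^d(x) = x. -/
/-!
Write `r = β⁻¹`. The `d`-Bonacci relation gives `r + r² + ⋯ + r^d = 1` and `r^d = 2 - β`.
For a `d`-periodic `0/1` word `w` put `V(w) = ∑_{m<d} wₘ r^(m+1) - w₀`; these two identities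
give `β V(w) = V(σw) + (w₁ - w₀)` for the shift `σ`, and `|V(w)| ≤ 1 - r < 1/2`. Hence the
nearest-integer digit of `β · εV(w)` is `ε(w₁ - w₀)` and `T(εV(w)) = εV(σw)`, so
`T^d(εV(w)) = εV(σ^d w) = εV(w)`. The point `x` is `εV(w)` for the word `w = (0 p₂ ⋯ p_d)^∞`,
and its smallest nonzero digit weight `r^d = 2 - β` keeps it out of the hole
`(β/2 - 1, 1 - β/2)` of `X`.
-/

open Finset

namespace SymmetricBeta

def IsDBonacci (d : ℕ) (β : ℝ) : Prop := β ^ d = ∑ i ∈ range d, β ^ i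

namespace IsDBonacci

variable {d : ℕ} {β : ℝ}

theorem pos (hβ : IsDBonacci d β) : 0 < d := by
  rw [Nat.pos_iff_ne_zero]
  rintro rfl
  simp [IsDBonacci] at hβ

theorem inv_pow_eq (hβ : IsDBonacci d β) : β⁻¹ ^ d = 2 - β := by
  have h := geom_sum_mul β d
  rw [← hβ] at h
  have hmul : β ^ d * (2 - β) = 1 := by linear_combination -h
  rw [_root_.inv_pow, inv_eq_of_mul_eq_one_right hmul]

theorem sum_inv_pow_succ (hβ : IsDBonacci d β) (h1 : 1 < β) :
    ∑ m ∈ range d, β⁻¹ ^ (m + 1) = 1 := by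
  have hr : β⁻¹ - 1 ≠ 0 := sub_ne_zero.2 (inv_ne_one.2 h1.ne')
  have h := geom_sum_mul β⁻¹ d
  rw [hβ.inv_pow_eq] at h
  simp_rw [pow_succ', ← mul_sum]
  apply mul_right_cancel₀ hr
  rw [mul_assoc, h]
  field_simp
  ring

end IsDBonacci

noncomputable def symmBetaMap (β x : ℝ) : ℝ := β * x - ⌊β * x + 1 / 2⌋

theorem symmBetaMap_eq_of_mul_eq {β x y : ℝ} {k : ℤ} (h : β * x = y + k) (hy : |y| < 1 / 2) :
    symmBetaMap β x = y := by
  have hk : ⌊β * x + 1 / 2⌋ = k := by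
    rw [Int.floor_eq_iff, h]
    constructor <;> linarith [abs_lt.1 hy]
  rw [symmBetaMap, hk, h]
  ring

noncomputable def cyclicValue (β : ℝ) (d : ℕ) (w : ℕ → ℝ) : ℝ :=
  ∑ m ∈ range d, w m * β⁻¹ ^ (m + 1) - w 0

section cyclicValue

variable {β : ℝ} {d : ℕ} {w : ℕ → ℝ}

theorem cyclicValue_succ (n : ℕ) :
    cyclicValue β (n + 1) w = ∑ m ∈ range n, w (m + 1) * β⁻¹ ^ (m + 2) + w 0 * (β⁻¹ - 1) := by
  rw [cyclicValue, sum_range_succ']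
  ring

theorem mul_cyclicValue (hβ0 : β ≠ 0) (hβd : β⁻¹ ^ d = 2 - β) (hd : 0 < d) (hw : w d = w 0) :
    β * cyclicValue β d w = cyclicValue β d (fun n ↦ w (n + 1)) + (w 1 - w 0) := by
  obtain ⟨n, rfl⟩ := Nat.exists_eq_add_of_lt hd
  rw [zero_add] at hw hβd ⊢
  have hβr : β * β⁻¹ = 1 := mul_inv_cancel₀ hβ0
  rw [cyclicValue_succ, cyclicValue, sum_range_succ, hw, hβd, mul_add, mul_sum]
  have hterm : ∀ m ∈ range n, β * (w (m + 1) * β⁻¹ ^ (m + 2)) = w (m + 1) * β⁻¹ ^ (m + 1) := by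
    intro m _
    rw [pow_succ' _ (m + 1)]
    linear_combination w (m + 1) * β⁻¹ ^ (m + 1) * hβr
  rw [sum_congr rfl hterm]
  linear_combination w 0 * hβr

theorem abs_cyclicValue_le (hβ : 0 < β) (hsum : ∑ m ∈ range d, β⁻¹ ^ (m + 1) = 1) (hd : 0 < d)
    (hw0 : ∀ n, 0 ≤ w n) (hw1 : ∀ n, w n ≤ 1) : |cyclicValue β d w| ≤ 1 - β⁻¹ := by
  obtain ⟨n, rfl⟩ := Nat.exists_eq_add_of_lt hd
  rw [zero_add] at hsum ⊢
  rw [sum_range_succ', zero_add, pow_one] at hsum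
  have hr : 0 ≤ β⁻¹ := inv_nonneg.2 hβ.le
  have hlo : 0 ≤ ∑ m ∈ range n, w (m + 1) * β⁻¹ ^ (m + 2) :=
    sum_nonneg fun m _ ↦ mul_nonneg (hw0 _) (pow_nonneg hr _)
  have hhi : ∑ m ∈ range n, w (m + 1) * β⁻¹ ^ (m + 2) ≤ 1 - β⁻¹ := by
    rw [← eq_sub_of_add_eq hsum]
    exact sum_le_sum fun m _ ↦ mul_le_of_le_one_left (pow_nonneg hr _) (hw1 _)
  rw [cyclicValue_succ, abs_le]
  constructor <;> nlinarith [hw0 0, hw1 0]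

end cyclicValue

section Orbit

variable {d : ℕ} {β : ℝ}

theorem abs_cyclicValue_lt_half (hβ : IsDBonacci d β) (h1 : 1 < β) (h2 : β < 2)
    {w : ℕ → ℕ} (hw1 : ∀ n, w n ≤ 1) : |cyclicValue β d (fun n ↦ w n)| < 1 / 2 := by
  have hbound : |cyclicValue β d (fun n ↦ w n)| ≤ 1 - β⁻¹ :=
    abs_cyclicValue_le (by linarith) (hβ.sum_inv_pow_succ h1) hβ.pos (fun _ ↦ by positivity)
      (fun n ↦ by exact_mod_cast hw1 n)
  have hinv : 2⁻¹ < β⁻¹ := (inv_lt_inv₀ two_pos (by linarith)).2 h2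
  linarith

theorem symmBetaMap_cyclicValue (hβ : IsDBonacci d β) (h1 : 1 < β) (h2 : β < 2)
    {w : ℕ → ℕ} (hw : Function.Periodic w d) (hw1 : ∀ n, w n ≤ 1) {ε : ℝ} (hε : ε = 1 ∨ ε = -1) :
    symmBetaMap β (ε * cyclicValue β d (fun n ↦ w n)) =
      ε * cyclicValue β d (fun n ↦ w (n + 1)) := by
  obtain ⟨k, hk⟩ : ∃ k : ℤ, (k : ℝ) = ε * ((w 1 : ℝ) - w 0) := by
    rcases hε with rfl | rfl
    exacts [⟨w 1 - w 0, by push_cast; ring⟩, ⟨w 0 - w 1, by push_cast; ring⟩]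
  have hε' : |ε| = 1 := by rcases hε with rfl | rfl <;> simp
  apply symmBetaMap_eq_of_mul_eq (k := k)
  · have hwd : (w d : ℝ) = w 0 := by exact_mod_cast (zero_add d ▸ hw 0)
    rw [hk, mul_left_comm, mul_cyclicValue (by linarith) hβ.inv_pow_eq hβ.pos hwd]
    ring
  · rw [abs_mul, hε', one_mul]
    exact abs_cyclicValue_lt_half hβ h1 h2 fun n ↦ hw1 (n + 1)

theorem iterate_symmBetaMap_cyclicValue (hβ : IsDBonacci d β) (h1 : 1 < β) (h2 : β < 2)
    {w : ℕ → ℕ} (hw : Function.Periodic w d) (hw1 : ∀ n, w n ≤ 1) {ε : ℝ} (hε : ε = 1 ∨ ε = -1)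
    (k : ℕ) : (symmBetaMap β)^[k] (ε * cyclicValue β d (fun n ↦ w n)) =
      ε * cyclicValue β d (fun n ↦ w (n + k)) := by
  induction k with
  | zero => rfl
  | succ k ih =>
    rw [Function.iterate_succ_apply', ih,
      symmBetaMap_cyclicValue hβ h1 h2 (hw.add_const k) (fun n ↦ hw1 _) hε]
    simp only [add_right_comm _ 1 k, add_assoc]

end Orbit

/-- The `d`-periodic word `0 p₂ p₃ … p_d 0 p₂ …`. -/
def cyclicWord (d : ℕ) (p : ℕ → ℕ) (n : ℕ) : ℕ := if n % d = 0 then 0 else p (n % d + 1)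

theorem cyclicWord_periodic (d : ℕ) (p : ℕ → ℕ) : Function.Periodic (cyclicWord d p) d := by
  intro n
  simp only [cyclicWord, Nat.add_mod_right]

theorem cyclicWord_le_one {d : ℕ} {p : ℕ → ℕ} (hp : ∀ i, p i ≤ 1) (n : ℕ) :
    cyclicWord d p n ≤ 1 := by
  unfold cyclicWord
  split
  exacts [zero_le_one, hp _]

theorem cyclicValue_cyclicWord {d : ℕ} (hd : 0 < d) (β : ℝ) (p : ℕ → ℕ) :
    cyclicValue β d (fun n ↦ cyclicWord d p n) = ∑ i ∈ Icc 2 d, (p i : ℝ) * β⁻¹ ^ i := by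
  obtain ⟨n, rfl⟩ := Nat.exists_eq_add_of_lt hd
  rw [zero_add, cyclicValue_succ, ← Ico_add_one_right_eq_Icc, sum_Ico_eq_sum_range]
  have hw0 : cyclicWord (n + 1) p 0 = 0 := by simp [cyclicWord]
  have hw : ∀ m ∈ range n, cyclicWord (n + 1) p (m + 1) = p (m + 2) := by
    intro m hm
    have hm : m + 1 < n + 1 := by simpa using hm
    simp [cyclicWord, Nat.mod_eq_of_lt hm]
  simp only [hw0, Nat.cast_zero, zero_mul, add_zero]
  refine sum_congr rfl fun m hm ↦ ?_
  rw [hw m hm, add_comm 2 m]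

theorem inv_pow_le_sum_of_ne_zero {β : ℝ} (hβ : 1 ≤ β) {d : ℕ} {s : Finset ℕ}
    (hs : ∀ i ∈ s, i ≤ d) {p : ℕ → ℕ} (h : ∑ i ∈ s, (p i : ℝ) * β⁻¹ ^ i ≠ 0) :
    β⁻¹ ^ d ≤ ∑ i ∈ s, (p i : ℝ) * β⁻¹ ^ i := by
  obtain ⟨i, hi, hpi⟩ := exists_ne_zero_of_sum_ne_zero h
  have hr0 : 0 ≤ β⁻¹ := inv_nonneg.2 (by linarith)
  have hr1 : β⁻¹ ≤ 1 := inv_le_one_of_one_le₀ hβ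
  calc β⁻¹ ^ d ≤ β⁻¹ ^ i := pow_le_pow_of_le_one hr0 hr1 (hs i hi)
    _ ≤ p i * β⁻¹ ^ i := by
      have : (1 : ℝ) ≤ p i := by
        exact_mod_cast Nat.one_le_iff_ne_zero.2 (by rintro h; simp [h] at hpi)
      nlinarith [pow_nonneg hr0 i]
    _ ≤ ∑ i ∈ s, (p i : ℝ) * β⁻¹ ^ i :=
      single_le_sum (f := fun i ↦ (p i : ℝ) * β⁻¹ ^ i) (fun j _ ↦ by positivity) hi

def symmDomain (β : ℝ) : Set ℝ := Set.Ico (-(1 : ℝ)/2) (β/2 - 1) ∪ Set.Ico (1 - β/2) (1/2 : ℝ)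

theorem mul_mem_symmDomain {β ε A : ℝ} (h2 : β < 2) (hε : ε = 1 ∨ ε = -1) (hlo : 2 - β ≤ A)
    (hhi : A < 1 / 2) : ε * A ∈ symmDomain β := by
  rcases hε with rfl | rfl
  · exact Or.inr ⟨by linarith, by linarith⟩
  · exact Or.inl ⟨by linarith, by linarith⟩

end SymmetricBeta

open SymmetricBeta in
theorem pure_periodic_points_forward_general (d : ℕ) (β : ℝ) (h1 : 1 < β) (h2 : β < 2)
    (hβ : β ^ d = ∑ i ∈ Finset.range d, β ^ i)
    (T : ℝ → ℝ) (hT : ∀ x, T x = β * x - (⌊β * x + 1/2⌋ : ℤ)) :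
    ∀ ε : ℝ, (ε = 1 ∨ ε = -1) → ∀ p : ℕ → ℕ, (∀ i, p i ≤ 1) →
      ∀ x : ℝ, x = ε * ∑ i ∈ Finset.Icc 2 d, (p i : ℝ) * (1/β) ^ i → x ≠ 0 →
        x ∈ Set.Ico (-(1 : ℝ)/2) (β/2 - 1) ∪ Set.Ico (1 - β/2) (1/2 : ℝ) ∧
        T^[d] x = x := by
  intro ε hε p hp x hx hx0
  have hβ' : IsDBonacci d β := hβ
  obtain rfl : T = symmBetaMap β := funext hT
  simp only [one_div] at hx
  have hw1 := cyclicWord_le_one (d := d) hp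
  have hA := cyclicValue_cyclicWord hβ'.pos β p
  refine ⟨?_, ?_⟩
  · have hlo := inv_pow_le_sum_of_ne_zero h1.le (fun i hi ↦ (mem_Icc.1 hi).2)
      (right_ne_zero_of_mul (hx ▸ hx0))
    have hhi := (abs_lt.1 (abs_cyclicValue_lt_half hβ' h1 h2 hw1)).2
    rw [hβ'.inv_pow_eq] at hlo
    rw [hA] at hhi
    exact hx ▸ mul_mem_symmDomain h2 hε hlo hhi
  · rw [hx, ← hA, iterate_symmBetaMap_cyclicValue hβ' h1 h2 (cyclicWord_periodic d p) hw1 hε]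
    simp only [cyclicWord_periodic d p _]

/-- Every nonzero `x = ε ∑_{i=2}^d pᵢ β^{-i}` with `ε = ±1`, `pᵢ ∈ {0,1}` lies in
`X = [-1/2, β/2-1) ∪ [1-β/2, 1/2)` and is purely periodic: `T^d x = x` for the
symmetric β-transformation `T`. -/
theorem pure_periodic_points_forward (d : ℕ) (hd : 2 ≤ d) (β : ℝ) (h1 : 1 < β) (h2 : β < 2)
    (hβ : β ^ d = ∑ i ∈ Finset.range d, β ^ i)
    (T : ℝ → ℝ) (hT : ∀ x, T x = β * x - (⌊β * x + 1/2⌋ : ℤ)) :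
    ∀ ε : ℝ, (ε = 1 ∨ ε = -1) → ∀ p : ℕ → ℕ, (∀ i, p i ≤ 1) →
      ∀ x : ℝ, x = ε * ∑ i ∈ Finset.Icc 2 d, (p i : ℝ) * (1/β) ^ i → x ≠ 0 →
        x ∈ Set.Ico (-(1 : ℝ)/2) (β/2 - 1) ∪ Set.Ico (1 - β/2) (1/2 : ℝ) ∧
        T^[d] x = x :=
  pure_periodic_points_forward_general d β h1 h2 hβ T hT
end

section
/- Let β ∈ (1,2) be the d-Bonacci number. Define l = -1/2 and consider the orbit of l under the symmetric β-transformation T. Then T(l) = -β/2 + 1, and the intervals Y_k for 1 ≤ k ≤ d defined by Y_k = [T^k l, T^{k+1} l) for 1 ≤ k ≤ d-1 and Y_d = [T^d l, 1/2), together with their negatives, partition X = [-1/2, β/2-1) ∪ [1-β/2, 1/2), and T maps Y_k onto Y_{k+1} bijectively (up to endpoints) for 1 ≤ k ≤ d-1, while T(Y_d) = (−Y_1) ∪ (−Y_2) ∪ ... ∪ (−Y_d). -/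
/-!
Put `c k = β^k (1/β - 1/2)`. The d-Bonacci relation is equivalent to `β^d (2 - β) = 1`, i.e.
`c (d + 1) = 1/2`. Since `T(-1/2) = 1 - β/2 = c 1` and `T` is multiplication by `β` as long as
the result stays below `1/2`, the orbit is `T^k(-1/2) = c k` for `1 ≤ k ≤ d`. Hence
`Y k = [c k, c (k+1))` and `N k = [-c (k+1), -c k)`: consecutive intervals that telescope to `X`.
On `Y k` with `k < d` the map is `x ↦ β x`, sending `Y k` onto `Y (k+1)`; on `Y d = [c d, 1/2)`
it is `x ↦ β x - 1`, sending it onto `[-1/2, -c 1)`, the union of the `N k`.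
-/

open Set

noncomputable def symBetaMap (β x : ℝ) : ℝ := β * x - ⌊β * x + 1 / 2⌋

section SymBetaMap

variable {β : ℝ}

theorem symBetaMap_eq_of_le_of_lt {x : ℝ} (n : ℤ) (h₁ : n - 1 / 2 ≤ β * x)
    (h₂ : β * x < n + 1 / 2) : symBetaMap β x = β * x - n := by
  have hfloor : ⌊β * x + 1 / 2⌋ = n := Int.floor_eq_iff.mpr ⟨by linarith, by linarith⟩
  rw [symBetaMap, hfloor]

theorem symBetaMap_neg_half (h₁ : 1 < β) (h₂ : β < 3) : symBetaMap β (-1 / 2) = 1 - β / 2 := by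
  rw [symBetaMap_eq_of_le_of_lt (-1) (by push_cast; linarith) (by push_cast; linarith)]
  push_cast
  ring

theorem bijOn_symBetaMap_Ico {a b : ℝ} (n : ℤ) (hβ : 0 < β) (ha : n - 1 / 2 ≤ β * a)
    (hb : β * b ≤ n + 1 / 2) :
    BijOn (symBetaMap β) (Ico a b) (Ico (β * a - n) (β * b - n)) := by
  have hinj : InjOn (fun x => β * x + -n) (Ico a b) := fun x _ y _ h => by
    simpa [hβ.ne'] using h
  have hbij := hinj.bijOn_image
  rw [image_affine_Ico hβ] at hbij
  simp only [← sub_eq_add_neg] at hbij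
  refine hbij.congr fun x ⟨hax, hxb⟩ => (symBetaMap_eq_of_le_of_lt n ?_ ?_).symm
  · exact ha.trans (mul_le_mul_of_nonneg_left hax hβ.le)
  · exact (mul_lt_mul_of_pos_left hxb hβ).trans_le hb

end SymBetaMap

section Telescoping

variable {α : Type*} [LinearOrder α] {f : ℕ → α} {m n : ℕ}

theorem Monotone.biUnion_Icc_Ico_succ (hf : Monotone f) (hmn : m ≤ n) :
    ⋃ k ∈ Finset.Icc m n, Ico (f k) (f (k + 1)) = Ico (f m) (f (n + 1)) := by
  induction n, hmn using Nat.le_induction with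
  | base => simp
  | succ n hmn ih =>
    rw [← Finset.insert_Icc_right_eq_Icc_add_one (by omega), Finset.set_biUnion_insert, ih,
      union_comm, Ico_union_Ico_eq_Ico (hf (by omega)) (hf (by omega))]

theorem Antitone.biUnion_Icc_Ico_succ (hf : Antitone f) (hmn : m ≤ n) :
    ⋃ k ∈ Finset.Icc m n, Ico (f (k + 1)) (f k) = Ico (f (n + 1)) (f m) := by
  induction n, hmn using Nat.le_induction with
  | base => simp
  | succ n hmn ih =>
    rw [← Finset.insert_Icc_right_eq_Icc_add_one (by omega), Finset.set_biUnion_insert, ih,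
      Ico_union_Ico_eq_Ico (hf (by omega)) (hf (by omega))]

end Telescoping

theorem pow_mul_two_sub_eq_one {R : Type*} [CommRing R] {β : R} {d : ℕ}
    (hβ : β ^ d = ∑ i ∈ Finset.range d, β ^ i) : β ^ d * (2 - β) = 1 := by
  linear_combination (1 - β) * hβ - geom_sum_mul β d

section DBonacci

variable {d : ℕ} {β : ℝ}

theorem lt_two_of_pow_eq_geom_sum (hβ : β ^ d = ∑ i ∈ Finset.range d, β ^ i) (h₀ : 0 < β) :
    β < 2 := by
  nlinarith [pow_mul_two_sub_eq_one hβ, pow_pos h₀ d]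

theorem one_le_of_pow_eq_geom_sum (hβ : β ^ d = ∑ i ∈ Finset.range d, β ^ i) (h₁ : 1 < β) :
    1 ≤ d := by
  refine Nat.one_le_iff_ne_zero.mpr fun hd => ?_
  have h := pow_mul_two_sub_eq_one hβ
  rw [hd, pow_zero, one_mul] at h
  linarith

end DBonacci

/-- `orbitPoint β k = T^k(-1/2)` for `1 ≤ k ≤ d`, and `orbitPoint β (d + 1) = 1/2`. -/
noncomputable def orbitPoint (β : ℝ) (k : ℕ) : ℝ := β ^ k * (1 / β - 1 / 2)

section OrbitPoint

variable {β : ℝ}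

theorem orbitPoint_succ (k : ℕ) : orbitPoint β (k + 1) = β * orbitPoint β k := by
  rw [orbitPoint, orbitPoint, pow_succ]
  ring

theorem orbitPoint_one (hβ : β ≠ 0) : orbitPoint β 1 = 1 - β / 2 := by
  rw [orbitPoint]
  field_simp

theorem orbitPoint_pos (h₀ : 0 < β) (h₂ : β < 2) (k : ℕ) : 0 < orbitPoint β k :=
  mul_pos (pow_pos h₀ k) (sub_pos.mpr (one_div_lt_one_div_of_lt h₀ h₂))

theorem orbitPoint_strictMono (h₁ : 1 < β) (h₂ : β < 2) : StrictMono (orbitPoint β) :=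
  strictMono_nat_of_lt_succ fun k => by
    rw [orbitPoint_succ]
    nlinarith [orbitPoint_pos (by linarith) h₂ k]

theorem orbitPoint_eq_half {d : ℕ} (hβ : β ^ d = ∑ i ∈ Finset.range d, β ^ i) (h₀ : β ≠ 0) :
    orbitPoint β (d + 1) = 1 / 2 := by
  rw [orbitPoint, pow_succ]
  field_simp
  linear_combination pow_mul_two_sub_eq_one hβ

theorem iterate_symBetaMap_neg_half (h₁ : 1 < β) (h₂ : β < 2) {k : ℕ} (hk : 1 ≤ k)
    (hk_half : orbitPoint β k < 1 / 2) : (symBetaMap β)^[k] (-1 / 2) = orbitPoint β k := by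
  induction k, hk using Nat.le_induction with
  | base =>
    rw [Function.iterate_one, symBetaMap_neg_half h₁ (by linarith), orbitPoint_one (by positivity)]
  | succ k hk ih =>
    have hstep := orbitPoint_succ (β := β) k
    have hk_half' := (orbitPoint_strictMono h₁ h₂ k.lt_succ_self).trans hk_half
    rw [Function.iterate_succ_apply', ih hk_half',
      symBetaMap_eq_of_le_of_lt 0 (by linarith [orbitPoint_pos (by linarith) h₂ (k + 1)])
        (by linarith), hstep, Int.cast_zero, sub_zero]

theorem iterate_symBetaMap_neg_half_of_le {d k : ℕ}
    (hβ : β ^ d = ∑ i ∈ Finset.range d, β ^ i) (h₁ : 1 < β) (hk : 1 ≤ k) (hkd : k ≤ d) :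
    (symBetaMap β)^[k] (-1 / 2) = orbitPoint β k := by
  have h₂ := lt_two_of_pow_eq_geom_sum hβ (zero_lt_one.trans h₁)
  refine iterate_symBetaMap_neg_half h₁ h₂ hk ?_
  rw [← orbitPoint_eq_half hβ (by positivity)]
  exact orbitPoint_strictMono h₁ h₂ (Nat.lt_succ_of_le hkd)

theorem bijOn_symBetaMap_orbitPoint (h₁ : 1 < β) (h₂ : β < 2) {k : ℕ}
    (hk : orbitPoint β (k + 2) ≤ 1 / 2) :
    BijOn (symBetaMap β) (Ico (orbitPoint β k) (orbitPoint β (k + 1)))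
      (Ico (orbitPoint β (k + 1)) (orbitPoint β (k + 2))) := by
  have hβ : 0 < β := zero_lt_one.trans h₁
  have hbij := bijOn_symBetaMap_Ico 0 hβ (a := orbitPoint β k) (b := orbitPoint β (k + 1))
    (by linarith [mul_pos hβ (orbitPoint_pos hβ h₂ k)])
    (by rwa [← orbitPoint_succ, Int.cast_zero, zero_add])
  rwa [Int.cast_zero, sub_zero, sub_zero, ← orbitPoint_succ, ← orbitPoint_succ] at hbij

theorem image_symBetaMap_orbitPoint {d : ℕ} (hβ : β ^ d = ∑ i ∈ Finset.range d, β ^ i)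
    (h₁ : 1 < β) :
    symBetaMap β '' Ico (orbitPoint β d) (orbitPoint β (d + 1)) =
      Ico (-orbitPoint β (d + 1)) (-orbitPoint β 1) := by
  have h₀ : 0 < β := zero_lt_one.trans h₁
  have hhalf := orbitPoint_eq_half hβ h₀.ne'
  have hbij := bijOn_symBetaMap_Ico 1 h₀ (a := orbitPoint β d) (b := orbitPoint β (d + 1))
    (by rw [← orbitPoint_succ, hhalf]; norm_num)
    (by rw [hhalf]; linarith [lt_two_of_pow_eq_geom_sum hβ h₀])
  rw [hbij.image_eq, ← orbitPoint_succ, hhalf, orbitPoint_one h₀.ne']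
  congr 1 <;> push_cast <;> ring

end OrbitPoint

theorem orbit_intervals_general (d : ℕ) (β : ℝ) (h1 : 1 < β)
    (hβ : β ^ d = ∑ i ∈ Finset.range d, β ^ i)
    (T : ℝ → ℝ) (hT : ∀ x, T x = β * x - (⌊β * x + 1/2⌋ : ℤ))
    (X : Set ℝ) (hX : X = Set.Ico (-(1 : ℝ)/2) (β/2 - 1) ∪ Set.Ico (1 - β/2) (1/2 : ℝ))
    (Y N : ℕ → Set ℝ)
    (hY : ∀ k, Y k = if k = d then Set.Ico (T^[d] (-(1:ℝ)/2)) (1/2 : ℝ)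
      else Set.Ico (T^[k] (-(1:ℝ)/2)) (T^[k+1] (-(1:ℝ)/2)))
    (hN : ∀ k, N k = if k = d then Set.Ico (-(1:ℝ)/2) (-(T^[d] (-(1:ℝ)/2)))
      else Set.Ico (-(T^[k+1] (-(1:ℝ)/2))) (-(T^[k] (-(1:ℝ)/2)))) :
    T (-(1:ℝ)/2) = 1 - β/2 ∧
    (⋃ k ∈ Finset.Icc 1 d, (Y k ∪ N k)) = X ∧
    (∀ k ∈ Finset.Icc 1 d, ∀ j ∈ Finset.Icc 1 d,
      (k ≠ j → Y k ∩ Y j = ∅ ∧ N k ∩ N j = ∅) ∧ Y k ∩ N j = ∅) ∧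
    (∀ k ∈ Finset.Icc 1 (d-1), Set.BijOn T (Y k) (Y (k+1))) ∧
    T '' Y d = ⋃ k ∈ Finset.Icc 1 d, N k := by
  obtain rfl : T = symBetaMap β := funext hT
  have h0 : 0 < β := zero_lt_one.trans h1
  have h2 := lt_two_of_pow_eq_geom_sum hβ h0
  have hd := one_le_of_pow_eq_geom_sum hβ h1
  have hc := orbitPoint_strictMono h1 h2
  have hc_half := orbitPoint_eq_half hβ h0.ne'
  have horbit k := iterate_symBetaMap_neg_half_of_le (k := k) hβ h1
  have hYN : ∀ k ∈ Finset.Icc 1 d, Y k = Ico (orbitPoint β k) (orbitPoint β (k + 1)) ∧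
      N k = Ico (-orbitPoint β (k + 1)) (-orbitPoint β k) := by
    intro k hk
    rw [Finset.mem_Icc] at hk
    rw [hY, hN]
    split_ifs with hkd
    · subst hkd
      rw [horbit k hk.1 le_rfl, hc_half, neg_div]
      exact ⟨rfl, rfl⟩
    · rw [horbit k hk.1 hk.2, horbit (k + 1) (by omega) (by omega)]
      exact ⟨rfl, rfl⟩
  have hNU : ⋃ k ∈ Finset.Icc 1 d, N k = Ico (-orbitPoint β (d + 1)) (-orbitPoint β 1) := by
    rw [iUnion₂_congr fun k hk => (hYN k hk).2]
    exact hc.monotone.neg.biUnion_Icc_Ico_succ hd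
  refine ⟨symBetaMap_neg_half h1 (by linarith), ?_, ?_, ?_, ?_⟩
  · rw [iUnion₂_congr fun k hk => by rw [(hYN k hk).1]]
    simp only [iUnion_union_distrib]
    rw [hNU, hc.monotone.biUnion_Icc_Ico_succ hd, hc_half, orbitPoint_one h0.ne', hX, union_comm]
    congr 2 <;> ring
  · intro k hk j hj
    simp only [(hYN k hk).1, (hYN j hj).1, (hYN k hk).2, (hYN j hj).2,
      ← disjoint_iff_inter_eq_empty]
    refine ⟨fun hkj => ⟨hc.monotone.pairwise_disjoint_on_Ico_succ hkj,
      hc.monotone.neg.pairwise_disjoint_on_Ico_succ hkj⟩, Disjoint.symm ?_⟩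
    refine (Iio_disjoint_Ici ?_).mono Ico_subset_Iio_self Ico_subset_Ici_self
    linarith [orbitPoint_pos h0 h2 j, orbitPoint_pos h0 h2 k]
  · intro k hk
    rw [Finset.mem_Icc] at hk
    rw [(hYN k (Finset.mem_Icc.mpr (by omega))).1, (hYN (k + 1) (Finset.mem_Icc.mpr (by omega))).1]
    exact bijOn_symBetaMap_orbitPoint h1 h2 (hc_half ▸ hc.monotone (by omega))
  · rw [(hYN d (Finset.mem_Icc.mpr ⟨hd, le_rfl⟩)).1, hNU, image_symBetaMap_orbitPoint hβ h1]

/-- The orbit of `l = -1/2` under the symmetric β-transformation `T` determines intervals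
`Y_1, ..., Y_d` whose union with their (suitably oriented) negatives `N_1, ..., N_d`
partitions `X`; `T l = 1 - β/2`, `T` maps `Y_k` bijectively onto `Y_{k+1}` for `k < d`,
and `T(Y_d) = N_1 ∪ ... ∪ N_d`. -/
theorem orbit_intervals (d : ℕ) (hd : 2 ≤ d) (β : ℝ) (h1 : 1 < β) (h2 : β < 2)
    (hβ : β ^ d = ∑ i ∈ Finset.range d, β ^ i)
    (T : ℝ → ℝ) (hT : ∀ x, T x = β * x - (⌊β * x + 1/2⌋ : ℤ))
    (X : Set ℝ) (hX : X = Set.Ico (-(1 : ℝ)/2) (β/2 - 1) ∪ Set.Ico (1 - β/2) (1/2 : ℝ))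
    (Y N : ℕ → Set ℝ)
    (hY : ∀ k, Y k = if k = d then Set.Ico (T^[d] (-(1:ℝ)/2)) (1/2 : ℝ)
      else Set.Ico (T^[k] (-(1:ℝ)/2)) (T^[k+1] (-(1:ℝ)/2)))
    (hN : ∀ k, N k = if k = d then Set.Ico (-(1:ℝ)/2) (-(T^[d] (-(1:ℝ)/2)))
      else Set.Ico (-(T^[k+1] (-(1:ℝ)/2))) (-(T^[k] (-(1:ℝ)/2)))) :
    T (-(1:ℝ)/2) = 1 - β/2 ∧
    (⋃ k ∈ Finset.Icc 1 d, (Y k ∪ N k)) = X ∧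
    (∀ k ∈ Finset.Icc 1 d, ∀ j ∈ Finset.Icc 1 d,
      (k ≠ j → Y k ∩ Y j = ∅ ∧ N k ∩ N j = ∅) ∧ Y k ∩ N j = ∅) ∧
    (∀ k ∈ Finset.Icc 1 (d-1), Set.BijOn T (Y k) (Y (k+1))) ∧
    T '' Y d = ⋃ k ∈ Finset.Icc 1 d, N k :=
  orbit_intervals_general d β h1 hβ T hT X hX Y N hY hN
end

section
/- Let β ∈ (1,2) be the d-Bonacci number and T the symmetric β-transformation on X = [-1/2, β/2-1) ∪ [1-β/2, 1/2). Define the density f: X → ℝ by f(x) = ∑_{j=1}^k β^{-j} for x ∈ Y_{±k} (where Y_{±k}, 1 ≤ k ≤ d, are the intervals determined by the orbit of -1/2 as in the paper). Then the measure μ with dμ = f dx is T-invariant: for every interval I ⊆ X, μ(T^{-1}(I)) = μ(I). In particular f is bounded below by 1/β > 0 on X, so the support of the invariant measure is all of X. -/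
/-!
Put `s k = β ^ k * (1 - β / 2)`. The d-Bonacci equation gives `s d = 1 / 2`, and then
`T^[k+1] (-1/2) = s k` for `k < d`, so `Y_{k+1} = [s k, s (k+1))` and `N_{k+1} = [-s (k+1), -s k)`.
On each of these pieces `T` is affine with slope `β`. It maps `Y_{k+1}` onto `Y_{k+2}` and
`N_{k+1}` onto `N_{k+2}` for `k + 1 < d`, while `Y_d` and `N_d` go onto the whole of the
opposite half of `X`. So for every set `I`, `μ (T⁻¹ I)` is `β⁻¹` times a reshuffled sum of the
weights `c k = ∑_{j ≤ k} β^{-j}` against the `|Y_j ∩ I| + |N_j ∩ I|`. This sum is `μ I`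
because `c 0 = 0`, `c (k+1) = (1 + c k) / β`, and `c d = 1` (again by the d-Bonacci equation).
-/

open MeasureTheory Set

lemma sum_Icc_one_eq_sum_range {M : Type*} [AddCommMonoid M] (f : ℕ → M) (k : ℕ) :
    ∑ j ∈ Finset.Icc 1 k, f j = ∑ i ∈ Finset.range k, f (i + 1) := by
  rw [Finset.range_eq_Ico, Finset.sum_Ico_add', ← Finset.Ico_add_one_right_eq_Icc]

/-- The weight identity behind invariance: piece `i` is carried onto piece `i + 1`, the top
piece onto all pieces, each with factor `e = β⁻¹`. -/
lemma sum_range_mul_shift {R : Type*} [CommSemiring R] {w : ℕ → R} {e : R} (h0 : w 0 = 0)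
    (hsucc : ∀ k, w (k + 1) = e * (1 + w k)) {m : ℕ} (htop : w (m + 1) = 1) (z : ℕ → R) :
    ∑ i ∈ Finset.range m, w (i + 1) * (e * z (i + 1))
      + w (m + 1) * (e * ∑ j ∈ Finset.range (m + 1), z j)
      = ∑ i ∈ Finset.range (m + 1), w (i + 1) * z i := by
  calc _ = e * ∑ j ∈ Finset.range (m + 1), z j + e * ∑ i ∈ Finset.range (m + 1), w i * z i := by
        rw [htop, one_mul, add_comm, Finset.sum_range_succ' (fun i => w i * z i), h0, zero_mul,
          add_zero, Finset.mul_sum (Finset.range m) _ e]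
        exact congrArg _ (Finset.sum_congr rfl fun i _ => by ring)
    _ = _ := by
        simp only [hsucc, Finset.mul_sum, ← Finset.sum_add_distrib]
        exact Finset.sum_congr rfl fun i _ => by ring

lemma measure_Ico_inter_eq_sum {μ : Measure ℝ} {u : ℕ → ℝ} (hu : Monotone u) (S : Set ℝ)
    (m : ℕ) :
    μ (Ico (u 0) (u m) ∩ S) = ∑ i ∈ Finset.range m, μ (Ico (u i) (u (i + 1)) ∩ S) := by
  simp_rw [← Measure.restrict_apply measurableSet_Ico]
  induction m with
  | zero => simp
  | succ m ih =>
    rw [Finset.sum_range_succ, ← ih, ← Ico_union_Ico_eq_Ico (hu (Nat.zero_le m)) (hu m.le_succ),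
      measure_union Ico_disjoint_Ico_same measurableSet_Ico]

lemma measure_Ico_neg_inter_eq_sum {μ : Measure ℝ} {u : ℕ → ℝ} (hu : Monotone u) (S : Set ℝ)
    (m : ℕ) :
    μ (Ico (-u m) (-u 0) ∩ S) = ∑ i ∈ Finset.range m, μ (Ico (-u (i + 1)) (-u i) ∩ S) := by
  simp_rw [← Measure.restrict_apply measurableSet_Ico]
  induction m with
  | zero => simp
  | succ m ih =>
    rw [Finset.sum_range_succ, ← ih,
      ← Ico_union_Ico_eq_Ico (neg_le_neg (hu m.le_succ)) (neg_le_neg (hu (Nat.zero_le m))),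
      measure_union Ico_disjoint_Ico_same measurableSet_Ico, add_comm]

lemma withDensity_sum_indicator_apply {α ι : Type*} [MeasurableSpace α] (μ : Measure α)
    [SFinite μ] (t : Finset ι) {A : ι → Set α} (hA : ∀ i ∈ t, MeasurableSet (A i))
    {w : ι → ℝ} (hw : ∀ i ∈ t, 0 ≤ w i) (S : Set α) :
    μ.withDensity (fun x => ENNReal.ofReal (∑ i ∈ t, (A i).indicator (fun _ => w i) x)) S
      = ∑ i ∈ t, ENNReal.ofReal (w i) * μ (A i ∩ S) := by
  have hind : ∀ x, ENNReal.ofReal (∑ i ∈ t, (A i).indicator (fun _ => w i) x)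
      = ∑ i ∈ t, (A i).indicator (fun _ => ENNReal.ofReal (w i)) x := fun x => by
    rw [ENNReal.ofReal_sum_of_nonneg fun i hi => indicator_nonneg (fun _ _ => hw i hi) x]
    refine Finset.sum_congr rfl fun i _ => ?_
    by_cases hx : x ∈ A i <;> simp [hx]
  rw [withDensity_apply' _ S, lintegral_congr hind,
    lintegral_finsetSum _ fun i hi => measurable_const.indicator (hA i hi)]
  refine Finset.sum_congr rfl fun i hi => ?_
  rw [lintegral_indicator_const (hA i hi), Measure.restrict_apply (hA i hi)]

noncomputable def symmBetaMap (β x : ℝ) : ℝ := β * x - ⌊β * x + 1 / 2⌋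

lemma symmBetaMap_eq {β x : ℝ} (n : ℤ) (h : β * x - n ∈ Ico (-1 / 2 : ℝ) (1 / 2)) :
    symmBetaMap β x = β * x - n := by
  rw [symmBetaMap, (Int.floor_eq_iff (z := n)).mpr ⟨by linarith [h.1], by linarith [h.2]⟩]

lemma volume_Ico_inter_preimage_symmBetaMap {β : ℝ} (hβ : 0 < β) {p q p' q' : ℝ} (n : ℤ)
    (hp : β * p - n = p') (hq : β * q - n = q') (hp' : -1 / 2 ≤ p') (hq' : q' ≤ 1 / 2)
    (I : Set ℝ) :
    volume (Ico p q ∩ symmBetaMap β ⁻¹' I) = ENNReal.ofReal β⁻¹ * volume (Ico p' q' ∩ I) := by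
  have hmem : ∀ x, x ∈ Ico p q ↔ β * x - n ∈ Ico p' q' := fun x => by
    subst hp hq
    simp only [mem_Ico, sub_le_sub_iff_right, sub_lt_sub_iff_right,
      mul_le_mul_iff_of_pos_left hβ, mul_lt_mul_iff_of_pos_left hβ]
  have hpre : Ico p q ∩ symmBetaMap β ⁻¹' I
      = (β * ·) ⁻¹' ((· + -(n : ℝ)) ⁻¹' (Ico p' q' ∩ I)) := by
    ext x
    simp only [mem_inter_iff, mem_preimage, ← sub_eq_add_neg, ← hmem]
    refine and_congr_right fun hx => ?_
    have hx' := (hmem x).1 hx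
    rw [symmBetaMap_eq n ⟨hp'.trans hx'.1, hx'.2.trans_le hq'⟩]
  rw [hpre, Real.volume_preimage_mul_left hβ.ne', measure_preimage_add_right, abs_inv,
    abs_of_pos hβ]

noncomputable def densityCoeff (β : ℝ) (k : ℕ) : ℝ := ∑ j ∈ Finset.Icc 1 k, (1 / β) ^ j

lemma densityCoeff_zero (β : ℝ) : densityCoeff β 0 = 0 := by simp [densityCoeff]

lemma densityCoeff_succ (β : ℝ) (k : ℕ) :
    densityCoeff β (k + 1) = 1 / β * (1 + densityCoeff β k) := by
  simp only [densityCoeff, sum_Icc_one_eq_sum_range, Finset.sum_range_succ', mul_add,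
    Finset.mul_sum, ← pow_succ']
  ring

lemma densityCoeff_nonneg {β : ℝ} (hβ : 0 ≤ β) (k : ℕ) : 0 ≤ densityCoeff β k :=
  Finset.sum_nonneg fun _ _ => by positivity

lemma one_div_le_densityCoeff_succ {β : ℝ} (hβ : 0 ≤ β) (k : ℕ) :
    1 / β ≤ densityCoeff β (k + 1) := by
  rw [densityCoeff_succ]
  exact le_mul_of_one_le_right (by positivity) (le_add_of_nonneg_right (densityCoeff_nonneg hβ k))

lemma pow_mul_densityCoeff {β : ℝ} (hβ : β ≠ 0) (k : ℕ) :
    β ^ k * densityCoeff β k = ∑ i ∈ Finset.range k, β ^ i := by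
  induction k with
  | zero => simp [densityCoeff_zero]
  | succ k ih =>
    rw [densityCoeff_succ, Finset.sum_range_succ, ← ih, pow_succ]
    field_simp
    ring

noncomputable def cutPoint (β : ℝ) (k : ℕ) : ℝ := β ^ k * (1 - β / 2)

lemma cutPoint_zero (β : ℝ) : cutPoint β 0 = 1 - β / 2 := by simp [cutPoint]

lemma cutPoint_succ (β : ℝ) (k : ℕ) : cutPoint β (k + 1) = β * cutPoint β k := by
  simp only [cutPoint, pow_succ]; ring

lemma cutPoint_pos {β : ℝ} (hβ : 0 < β) (h2 : β < 2) (k : ℕ) : 0 < cutPoint β k := by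
  have : 0 < 1 - β / 2 := by linarith
  unfold cutPoint
  positivity

lemma cutPoint_strictMono {β : ℝ} (h1 : 1 < β) (h2 : β < 2) : StrictMono (cutPoint β) :=
  fun _ _ hij => mul_lt_mul_of_pos_right (pow_lt_pow_right₀ h1 hij) (by linarith)

/-- `posPiece β i` and `negPiece β i` are `Y (i + 1)` and `N (i + 1)`, the paper's `Y_{±(i+1)}`. -/
def posPiece (β : ℝ) (i : ℕ) : Set ℝ := Ico (cutPoint β i) (cutPoint β (i + 1))

def negPiece (β : ℝ) (i : ℕ) : Set ℝ := Ico (-cutPoint β (i + 1)) (-cutPoint β i)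

lemma measurableSet_posPiece (β : ℝ) (i : ℕ) : MeasurableSet (posPiece β i) := measurableSet_Ico

lemma measurableSet_negPiece (β : ℝ) (i : ℕ) : MeasurableSet (negPiece β i) := measurableSet_Ico

noncomputable def pieceVolume (β : ℝ) (i : ℕ) (S : Set ℝ) : ENNReal :=
  volume (posPiece β i ∩ S) + volume (negPiece β i ∩ S)

section Pieces

variable {β : ℝ} (h1 : 1 < β) (h2 : β < 2)
include h1 h2

lemma pieceVolume_inter_of_subset {d i : ℕ} (hi : i < d) {X : Set ℝ}
    (hX : Ico (-cutPoint β d) (-cutPoint β 0) ∪ Ico (cutPoint β 0) (cutPoint β d) ⊆ X)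
    (S : Set ℝ) : pieceVolume β i (X ∩ S) = pieceVolume β i S := by
  have hmono := (cutPoint_strictMono h1 h2).monotone
  have hP : posPiece β i ⊆ X :=
    ((Ico_subset_Ico (hmono i.zero_le) (hmono hi)).trans subset_union_right).trans hX
  have hQ : negPiece β i ⊆ X :=
    ((Ico_subset_Ico (neg_le_neg (hmono hi)) (neg_le_neg (hmono i.zero_le))).trans
      subset_union_left).trans hX
  rw [pieceVolume, ← inter_assoc, inter_eq_left.2 hP, ← inter_assoc, inter_eq_left.2 hQ,
    pieceVolume]

lemma pieceVolume_preimage_of_succ_lt {d i : ℕ} (hlast : cutPoint β d = 1 / 2) (hi : i + 1 < d)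
    (I : Set ℝ) :
    pieceVolume β i (symmBetaMap β ⁻¹' I) = ENNReal.ofReal β⁻¹ * pieceVolume β (i + 1) I := by
  have hb : 0 < β := by linarith
  have hpos := cutPoint_pos hb h2
  have hle : cutPoint β (i + 1 + 1) ≤ 1 / 2 := hlast ▸ (cutPoint_strictMono h1 h2).monotone hi
  rw [pieceVolume, pieceVolume, mul_add, posPiece, negPiece, posPiece, negPiece,
    volume_Ico_inter_preimage_symmBetaMap hb 0 (p' := cutPoint β (i + 1))
      (q' := cutPoint β (i + 1 + 1)) (by simp [cutPoint_succ]) (by simp [cutPoint_succ])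
      (by linarith [hpos (i + 1)]) hle,
    volume_Ico_inter_preimage_symmBetaMap hb 0 (p' := -cutPoint β (i + 1 + 1))
      (q' := -cutPoint β (i + 1)) (by simp [cutPoint_succ]) (by simp [cutPoint_succ])
      (by linarith) (by linarith [hpos (i + 1)])]

lemma pieceVolume_preimage_top {m : ℕ} (hlast : cutPoint β (m + 1) = 1 / 2) (I : Set ℝ) :
    pieceVolume β m (symmBetaMap β ⁻¹' I)
      = ENNReal.ofReal β⁻¹ * ∑ j ∈ Finset.range (m + 1), pieceVolume β j I := by
  have hb : 0 < β := by linarith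
  have hpos := cutPoint_pos hb h2
  have hmono := (cutPoint_strictMono h1 h2).monotone
  have hm : β * cutPoint β m = 1 / 2 := by rw [← cutPoint_succ, hlast]
  rw [pieceVolume, posPiece, negPiece,
    volume_Ico_inter_preimage_symmBetaMap hb 1 (p' := -cutPoint β (m + 1))
      (q' := -cutPoint β 0) (by push_cast; linarith)
      (by rw [hlast, cutPoint_zero]; push_cast; ring) (by linarith) (by linarith [hpos 0]),
    volume_Ico_inter_preimage_symmBetaMap hb (-1) (p' := cutPoint β 0)
      (q' := cutPoint β (m + 1)) (by rw [hlast, cutPoint_zero]; push_cast; ring)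
      (by push_cast; linarith) (by linarith [hpos 0]) hlast.le,
    measure_Ico_inter_eq_sum hmono, measure_Ico_neg_inter_eq_sum hmono, add_comm, ← mul_add,
    ← Finset.sum_add_distrib]
  rfl

end Pieces

section DBonacci

variable {β : ℝ} {d : ℕ} (hβ : β ^ d = ∑ i ∈ Finset.range d, β ^ i)
include hβ

lemma cutPoint_of_dBonacci : cutPoint β d = 1 / 2 := by
  have := geom_sum_mul β d
  rw [← hβ] at this
  unfold cutPoint
  linarith

lemma densityCoeff_of_dBonacci (hβ0 : β ≠ 0) : densityCoeff β d = 1 := by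
  have h := pow_mul_densityCoeff hβ0 d
  rw [← hβ] at h
  exact (mul_eq_left₀ (pow_ne_zero d hβ0)).mp h

lemma iterate_symmBetaMap_neg_half (h1 : 1 < β) (h2 : β < 2) {k : ℕ} (hk : k < d) :
    (symmBetaMap β)^[k + 1] (-1 / 2) = cutPoint β k := by
  induction k with
  | zero =>
    rw [Function.iterate_one, symmBetaMap_eq (-1) ⟨by push_cast; linarith, by push_cast; linarith⟩,
      cutPoint_zero]
    push_cast
    ring
  | succ k ih =>
    have hlt : cutPoint β (k + 1) < 1 / 2 :=
      cutPoint_of_dBonacci hβ ▸ cutPoint_strictMono h1 h2 hk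
    have hpos := cutPoint_pos (by linarith) h2 (k + 1)
    rw [Function.iterate_succ_apply', ih (by omega), symmBetaMap_eq 0] <;>
      rw [Int.cast_zero, sub_zero, ← cutPoint_succ]
    exact ⟨by linarith, hlt⟩

end DBonacci

noncomputable def densityMass (β : ℝ) (d : ℕ) (S : Set ℝ) : ENNReal :=
  ∑ i ∈ Finset.range d, ENNReal.ofReal (densityCoeff β (i + 1)) * pieceVolume β i S

theorem densityMass_preimage_symmBetaMap {β : ℝ} {d : ℕ} (h1 : 1 < β) (h2 : β < 2)
    (hβ : β ^ d = ∑ i ∈ Finset.range d, β ^ i) (I : Set ℝ) :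
    densityMass β d (symmBetaMap β ⁻¹' I) = densityMass β d I := by
  obtain _ | m := d
  · simp [densityMass]
  have hb : 0 < β := by linarith
  have hlast := cutPoint_of_dBonacci hβ
  have hcoeff : ∀ k, ENNReal.ofReal (densityCoeff β (k + 1))
      = ENNReal.ofReal β⁻¹ * (1 + ENNReal.ofReal (densityCoeff β k)) := fun k => by
    rw [densityCoeff_succ, ENNReal.ofReal_mul (by positivity),
      ENNReal.ofReal_add zero_le_one (densityCoeff_nonneg hb.le k), ENNReal.ofReal_one, one_div]
  rw [densityMass, Finset.sum_range_succ, pieceVolume_preimage_top h1 h2 hlast,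
    Finset.sum_congr rfl fun i hi => by
      rw [pieceVolume_preimage_of_succ_lt h1 h2 hlast (by simpa using hi)]]
  exact sum_range_mul_shift (w := fun k => ENNReal.ofReal (densityCoeff β k))
    (by simp [densityCoeff_zero]) hcoeff (by simp [densityCoeff_of_dBonacci hβ hb.ne'])
    (pieceVolume β · I)

lemma densityMass_inter_of_subset {β : ℝ} (h1 : 1 < β) (h2 : β < 2) (d : ℕ) {X : Set ℝ}
    (hX : Ico (-cutPoint β d) (-cutPoint β 0) ∪ Ico (cutPoint β 0) (cutPoint β d) ⊆ X)
    (S : Set ℝ) : densityMass β d (X ∩ S) = densityMass β d S :=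
  Finset.sum_congr rfl fun _ hi => by
    rw [pieceVolume_inter_of_subset h1 h2 (Finset.mem_range.1 hi) hX]

noncomputable def density (β : ℝ) (d : ℕ) (x : ℝ) : ℝ :=
  ∑ i ∈ Finset.range d,
    (posPiece β i ∪ negPiece β i).indicator (fun _ => densityCoeff β (i + 1)) x

lemma withDensity_density_apply {β : ℝ} (hβ : 0 < β) (h2 : β < 2) (d : ℕ) (S : Set ℝ) :
    volume.withDensity (fun x => ENNReal.ofReal (density β d x)) S = densityMass β d S := by
  simp only [density]
  rw [withDensity_sum_indicator_apply _ _
    (fun i _ => (measurableSet_posPiece β i).union (measurableSet_negPiece β i))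
    (fun i _ => densityCoeff_nonneg hβ.le (i + 1))]
  refine Finset.sum_congr rfl fun i _ => ?_
  have hdisj : Disjoint (posPiece β i) (negPiece β i) :=
    disjoint_left.2 fun x hx hx' => by linarith [hx.1, hx'.2, cutPoint_pos hβ h2 i]
  rw [← Measure.restrict_apply ((measurableSet_posPiece β i).union (measurableSet_negPiece β i)),
    measure_union hdisj (measurableSet_negPiece β i),
    Measure.restrict_apply (measurableSet_posPiece β i),
    Measure.restrict_apply (measurableSet_negPiece β i), pieceVolume]

lemma exists_mem_piece {β x : ℝ} {d : ℕ}
    (hx : x ∈ Ico (-cutPoint β d) (-cutPoint β 0) ∪ Ico (cutPoint β 0) (cutPoint β d)) :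
    ∃ i < d, x ∈ posPiece β i ∪ negPiece β i := by
  rcases hx with hx | hx
  · have hx' : -x ∈ Ioc (cutPoint β 0) (cutPoint β d) := ⟨by linarith [hx.2], by linarith [hx.1]⟩
    obtain ⟨i, hi, hxi⟩ := mem_iUnion₂.1 (Ioc_subset_biUnion_Ioc d (cutPoint β) hx')
    exact ⟨i, Finset.mem_range.1 hi, Or.inr ⟨by linarith [hxi.2], by linarith [hxi.1]⟩⟩
  · obtain ⟨i, hi, hxi⟩ := mem_iUnion₂.1 (Ico_subset_biUnion_Ico d (cutPoint β) hx)
    exact ⟨i, Finset.mem_range.1 hi, Or.inl hxi⟩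

lemma one_div_le_density {β x : ℝ} {d : ℕ} (hβ : 0 < β)
    (hx : x ∈ Ico (-cutPoint β d) (-cutPoint β 0) ∪ Ico (cutPoint β 0) (cutPoint β d)) :
    1 / β ≤ density β d x := by
  obtain ⟨i, hi, hxi⟩ := exists_mem_piece hx
  calc 1 / β ≤ densityCoeff β (i + 1) := one_div_le_densityCoeff_succ hβ.le i
    _ = (posPiece β i ∪ negPiece β i).indicator (fun _ => densityCoeff β (i + 1)) x :=
      (indicator_of_mem hxi (fun _ => densityCoeff β (i + 1))).symm
    _ ≤ density β d x := Finset.single_le_sum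
      (f := fun j => (posPiece β j ∪ negPiece β j).indicator (fun _ => densityCoeff β (j + 1)) x)
      (fun j _ => indicator_nonneg (fun _ _ => densityCoeff_nonneg hβ.le (j + 1)) x)
      (Finset.mem_range.2 hi)

open MeasureTheory in
theorem invariant_measure_general (d : ℕ) (β : ℝ) (h1 : 1 < β) (h2 : β < 2)
    (hβ : β ^ d = ∑ i ∈ Finset.range d, β ^ i)
    (T : ℝ → ℝ) (hT : ∀ x, T x = β * x - (⌊β * x + 1/2⌋ : ℤ))
    (X : Set ℝ) (hX : X = Set.Ico (-(1 : ℝ)/2) (β/2 - 1) ∪ Set.Ico (1 - β/2) (1/2 : ℝ))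
    (Y N : ℕ → Set ℝ)
    (hY : ∀ k, Y k = if k = d then Set.Ico (T^[d] (-(1:ℝ)/2)) (1/2 : ℝ)
      else Set.Ico (T^[k] (-(1:ℝ)/2)) (T^[k+1] (-(1:ℝ)/2)))
    (hN : ∀ k, N k = if k = d then Set.Ico (-(1:ℝ)/2) (-(T^[d] (-(1:ℝ)/2)))
      else Set.Ico (-(T^[k+1] (-(1:ℝ)/2))) (-(T^[k] (-(1:ℝ)/2))))
    (f : ℝ → ℝ)
    (hf : ∀ x, f x = ∑ k ∈ Finset.Icc 1 d,
      Set.indicator (Y k ∪ N k) (fun _ => ∑ j ∈ Finset.Icc 1 k, (1/β) ^ j) x)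
    (μ : Measure ℝ) (hμ : μ = volume.withDensity (fun x => ENNReal.ofReal (f x))) :
    (∀ a b : ℝ, Set.Ico a b ⊆ X → μ (X ∩ T ⁻¹' Set.Ico a b) = μ (Set.Ico a b)) ∧
    (∀ x ∈ X, 1/β ≤ f x) ∧ (0 : ℝ) < 1/β := by
  obtain rfl : T = symmBetaMap β := funext hT
  have hb : 0 < β := by linarith
  have hlast : cutPoint β d = 1 / 2 := cutPoint_of_dBonacci hβ
  have hX' : X = Ico (-cutPoint β d) (-cutPoint β 0) ∪ Ico (cutPoint β 0) (cutPoint β d) := by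
    rw [hX, hlast, cutPoint_zero]
    congr 2 <;> ring
  have hpiece : ∀ i < d, Y (i + 1) ∪ N (i + 1) = posPiece β i ∪ negPiece β i := fun i hi => by
    rw [hY, hN, posPiece, negPiece, iterate_symmBetaMap_neg_half hβ h1 h2 hi]
    split_ifs with hid
    · subst hid
      rw [iterate_symmBetaMap_neg_half hβ h1 h2 hi, ← hlast,
        show (-1 / 2 : ℝ) = -cutPoint β (i + 1) by rw [hlast]; ring]
    · rw [iterate_symmBetaMap_neg_half hβ h1 h2 (by omega : i + 1 < d)]
  have hf' : f = density β d := funext fun x => by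
    rw [hf, sum_Icc_one_eq_sum_range]
    exact Finset.sum_congr rfl fun i hi => by rw [hpiece i (Finset.mem_range.1 hi)]; rfl
  have hμS : ∀ S, μ S = densityMass β d S := fun S => by
    rw [hμ, hf', withDensity_density_apply hb h2]
  refine ⟨fun a b _ => ?_, fun x hx => hf' ▸ one_div_le_density hb (hX' ▸ hx), by positivity⟩
  rw [hμS, hμS, hX', densityMass_inter_of_subset h1 h2 d subset_rfl,
    densityMass_preimage_symmBetaMap h1 h2 hβ]

open MeasureTheory in
/-- The measure `dμ = f dx`, with piecewise-constant density `f = ∑_{j=1}^k β^{-j}` on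
`Y_{±k}`, is invariant under the symmetric β-transformation `T`; moreover `f ≥ 1/β > 0`
on `X`, so the support of the invariant measure is all of `X`. -/
theorem invariant_measure (d : ℕ) (hd : 2 ≤ d) (β : ℝ) (h1 : 1 < β) (h2 : β < 2)
    (hβ : β ^ d = ∑ i ∈ Finset.range d, β ^ i)
    (T : ℝ → ℝ) (hT : ∀ x, T x = β * x - (⌊β * x + 1/2⌋ : ℤ))
    (X : Set ℝ) (hX : X = Set.Ico (-(1 : ℝ)/2) (β/2 - 1) ∪ Set.Ico (1 - β/2) (1/2 : ℝ))
    (Y N : ℕ → Set ℝ)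
    (hY : ∀ k, Y k = if k = d then Set.Ico (T^[d] (-(1:ℝ)/2)) (1/2 : ℝ)
      else Set.Ico (T^[k] (-(1:ℝ)/2)) (T^[k+1] (-(1:ℝ)/2)))
    (hN : ∀ k, N k = if k = d then Set.Ico (-(1:ℝ)/2) (-(T^[d] (-(1:ℝ)/2)))
      else Set.Ico (-(T^[k+1] (-(1:ℝ)/2))) (-(T^[k] (-(1:ℝ)/2))))
    (f : ℝ → ℝ)
    (hf : ∀ x, f x = ∑ k ∈ Finset.Icc 1 d,
      Set.indicator (Y k ∪ N k) (fun _ => ∑ j ∈ Finset.Icc 1 k, (1/β) ^ j) x)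
    (μ : Measure ℝ) (hμ : μ = volume.withDensity (fun x => ENNReal.ofReal (f x))) :
    (∀ a b : ℝ, Set.Ico a b ⊆ X → μ (X ∩ T ⁻¹' Set.Ico a b) = μ (Set.Ico a b)) ∧
    (∀ x ∈ X, 1/β ≤ f x) ∧ (0 : ℝ) < 1/β :=
  invariant_measure_general d β h1 h2 hβ T hT X hX Y N hY hN f hf μ hμ
end

section
/- Let β ∈ (1,2) be the d-Bonacci number, d ≥ 3. For h ∈ {1, ..., d-1} define L_h = ([h] ∩ [1-β/2, 1/2)) ∪ ([h-d] ∩ [-1/2, β/2-1)), where [j] denotes the congruence class j + (β-1)ℤ[β] inside ℤ[β]. Then L_{d-h} = −L_h for every h ∈ {1, ..., d-1}. -/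
/-- With `[j] = j + (β-1)ℤ[β]` and
`L_h = ([h] ∩ [1-β/2, 1/2)) ∪ ([h-d] ∩ [-1/2, β/2-1))`, one has `L_{d-h} = -L_h` for all
`h ∈ {1, ..., d-1}`, where `β` is the d-Bonacci number, `d ≥ 3`. -/
theorem layers_neg (d : ℕ) (hd : 3 ≤ d) (β : ℝ) (h1 : 1 < β) (h2 : β < 2)
    (hβ : β ^ d = ∑ i ∈ Finset.range d, β ^ i)
    (C : ℤ → Set ℝ)
    (hC : ∀ j, C j = {x : ℝ | ∃ z ∈ Algebra.adjoin ℤ ({β} : Set ℝ),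
      x = (j : ℝ) + (β - 1) * z})
    (L : ℤ → Set ℝ)
    (hL : ∀ h, L h = (C h ∩ Set.Ico (1 - β/2) (1/2 : ℝ)) ∪
      (C (h - d) ∩ Set.Ico (-(1 : ℝ)/2) (β/2 - 1))) :
    ∀ h : ℤ, 1 ≤ h → h ≤ (d : ℤ) - 1 → L ((d : ℤ) - h) = -(L h) := by
  set R := Algebra.adjoin ℤ ({β} : Set ℝ) with hRdef
  have hβR : β ∈ R := Algebra.self_mem_adjoin_singleton ℤ β
  -- β is integral over ℤ
  have hβint : IsIntegral ℤ β := by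
    refine ⟨Polynomial.X ^ d - ∑ i ∈ Finset.range d, Polynomial.X ^ i, ?_, ?_⟩
    · apply Polynomial.monic_X_pow_sub
      refine lt_of_le_of_lt (Polynomial.degree_sum_le _ _) ?_
      rw [Finset.sup_lt_iff (by exact_mod_cast WithBot.bot_lt_coe d)]
      intro i hi
      refine lt_of_le_of_lt (Polynomial.degree_X_pow_le i) ?_
      exact_mod_cast Finset.mem_range.mp hi
    · have : Polynomial.aeval β ((Polynomial.X : Polynomial ℤ) ^ d - ∑ i ∈ Finset.range d, Polynomial.X ^ i) = 0 := by
        simp [map_sub, map_sum, hβ]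
      simpa [Polynomial.aeval_def] using this
  -- all elements of R are integral
  have hRle : R ≤ integralClosure ℤ ℝ :=
    Algebra.adjoin_le (Set.singleton_subset_iff.mpr hβint)
  have hRint : ∀ x ∈ R, IsIntegral ℤ x := fun x hx => hRle hx
  -- β⁻¹ as an element of R
  have hwR : (β ^ (d-1) - ∑ i ∈ Finset.range (d-1), β ^ i) ∈ R :=
    sub_mem (pow_mem hβR _) (Subalgebra.sum_mem _ (fun i _ => pow_mem hβR _))
  have hwβ : β * (β ^ (d-1) - ∑ i ∈ Finset.range (d-1), β ^ i) = 1 := by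
    have hdpos : 0 < d := by omega
    have hd1 : d - 1 + 1 = d := Nat.succ_pred_eq_of_pos hdpos
    have hmul : β * β ^ (d-1) = β ^ d := by rw [← pow_succ', hd1]
    rw [mul_sub, hmul, Finset.mul_sum]
    have h2' : ∑ i ∈ Finset.range (d-1), β * β ^ i = ∑ i ∈ Finset.range (d-1), β ^ (i+1) := by
      refine Finset.sum_congr rfl fun i _ => ?_
      rw [← pow_succ']
    rw [h2', hβ, show d = (d-1) + 1 by omega, Finset.sum_range_succ']
    simp
  -- 1/2 is not integral over ℤ
  have hhalf : ¬ IsIntegral ℤ ((1:ℝ)/2) := by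
    intro hint
    have he : ((1:ℝ)/2) = algebraMap ℚ ℝ (1/2 : ℚ) := by norm_num
    rw [he, isIntegral_algebraMap_iff ((algebraMap ℚ ℝ).injective)] at hint
    obtain ⟨y, hy⟩ := IsIntegrallyClosed.isIntegral_iff.mp hint
    have hy' : ((y:ℚ)) = 1/2 := hy
    have h2' : (2:ℚ) * y = 1 := by rw [hy']; norm_num
    have : (2 * y : ℤ) = 1 := by exact_mod_cast h2'
    omega
  -- key: forbidden endpoint values
  have key : ∀ (j : ℤ) (z : ℝ), z ∈ R →
      ((j:ℝ) + (β-1)*z ≠ 1/2 ∧ (j:ℝ) + (β-1)*z ≠ -(1:ℝ)/2 ∧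
       (j:ℝ) + (β-1)*z ≠ β/2 - 1 ∧ (j:ℝ) + (β-1)*z ≠ 1 - β/2) := by
    intro j z hz
    have hxR : ((j:ℝ) + (β-1)*z) ∈ R := by
      refine add_mem ?_ (mul_mem (sub_mem hβR (one_mem R)) hz)
      exact_mod_cast Subalgebra.intCast_mem R j
    have hxint : IsIntegral ℤ ((j:ℝ) + (β-1)*z) := hRint _ hxR
    have half_of_b2 : IsIntegral ℤ (β/2) → False := by
      intro hb2
      apply hhalf
      have he : ((1:ℝ)/2) = (β ^ (d-1) - ∑ i ∈ Finset.range (d-1), β ^ i) * (β/2) := by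
        field_simp
        rw [mul_comm] at hwβ
        linarith [hwβ]
      rw [he]
      exact (hRint _ hwR).mul hb2
    refine ⟨?_, ?_, ?_, ?_⟩
    · intro he; exact hhalf (he ▸ hxint)
    · intro he
      apply hhalf
      have h' : ((1:ℝ)/2) = -((j:ℝ) + (β-1)*z) := by rw [he]; ring
      rw [h']; exact hxint.neg
    · intro he
      apply half_of_b2
      have h' : β/2 = ((j:ℝ) + (β-1)*z) + 1 := by rw [he]; ring
      rw [h']; exact hxint.add isIntegral_one
    · intro he
      apply half_of_b2
      have h' : β/2 = -((j:ℝ) + (β-1)*z) + 1 := by rw [he]; ring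
      rw [h']; exact hxint.neg.add isIntegral_one
  intro h hh1 hh2
  ext x
  simp only [hL, hC, Set.mem_union, Set.mem_inter_iff, Set.mem_setOf_eq, Set.mem_Ico,
    Set.mem_neg]
  constructor
  · rintro (⟨⟨z, hz, hxe⟩, hx1, hx2⟩ | ⟨⟨z, hz, hxe⟩, hx1, hx2⟩)
    · -- x ∈ C(d-h) ∩ [1-β/2, 1/2)  →  -x ∈ C(h-d) ∩ [-1/2, β/2-1)
      right
      refine ⟨⟨-z, neg_mem hz, by rw [hxe]; push_cast; ring⟩, by linarith, ?_⟩
      have hne : x ≠ 1 - β/2 := by rw [hxe]; exact (key _ z hz).2.2.2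
      have : 1 - β/2 < x := lt_of_le_of_ne hx1 (Ne.symm hne)
      linarith
    · -- x ∈ C(d-h-d) ∩ [-1/2, β/2-1)  →  -x ∈ C(h) ∩ [1-β/2, 1/2)
      left
      refine ⟨⟨-z, neg_mem hz, by rw [hxe]; push_cast; ring⟩, by linarith, ?_⟩
      have hne : x ≠ -(1:ℝ)/2 := by rw [hxe]; exact (key _ z hz).2.1
      have : -(1:ℝ)/2 < x := lt_of_le_of_ne hx1 (Ne.symm hne)
      linarith
  · rintro (⟨⟨z, hz, hxe⟩, hx1, hx2⟩ | ⟨⟨z, hz, hxe⟩, hx1, hx2⟩)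
    · -- -x ∈ C(h) ∩ [1-β/2, 1/2)  →  x ∈ C(d-h-d) ∩ [-1/2, β/2-1)
      right
      have hxe' : x = -((h:ℝ) + (β-1)*z) := by rw [← hxe]; ring
      refine ⟨⟨-z, neg_mem hz, by rw [hxe']; push_cast; ring⟩, by linarith, ?_⟩
      have hne : -x ≠ 1 - β/2 := by rw [hxe]; exact (key _ z hz).2.2.2
      have : 1 - β/2 < -x := lt_of_le_of_ne hx1 (Ne.symm hne)
      linarith
    · -- -x ∈ C(h-d) ∩ [-1/2, β/2-1)  →  x ∈ C(d-h) ∩ [1-β/2, 1/2)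
      left
      have hxe' : x = -(((h - (d:ℤ) : ℤ):ℝ) + (β-1)*z) := by rw [← hxe]; ring
      refine ⟨⟨-z, neg_mem hz, by rw [hxe']; push_cast; ring⟩, by linarith, ?_⟩
      have hne : -x ≠ -(1:ℝ)/2 := by rw [hxe]; exact (key _ z hz).2.1
      have : -(1:ℝ)/2 < -x := lt_of_le_of_ne hx1 (Ne.symm hne)
      linarith
end
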